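/- arXiv:math/0611389 — 6 statements merged into one kernel-verified Lean document; each statement's English description precedes it below -/
import Mathlib

section
/- The Killing form B* of the Lie algebra g* = ℝ^{(n,n)} × ℝ^{(m,n)} with bracket [(X₁,Z₁),(X₂,Z₂)] = (X₁X₂ − X₂X₁, Z₂·ᵗX₁ − Z₁·ᵗX₂) is given by B*((X₁,Z₁),(X₂,Z₂)) = (2n+m)·tr(X₁X₂) − 2·tr(X₁)·tr(X₂). -/
open Matrix

/-- The adjoint map `ad*(u)(v) = [u,v] = (X₁X₂ − X₂X₁, Z₂·ᵗX₁ − Z₁·ᵗX₂)` of the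
Lie algebra `g* = ℝ^{(n,n)} × ℝ^{(m,n)}`, as a linear endomorphism. -/
noncomputable def adStar (m n : ℕ)
    (u : Matrix (Fin n) (Fin n) ℝ × Matrix (Fin m) (Fin n) ℝ) :
    (Matrix (Fin n) (Fin n) ℝ × Matrix (Fin m) (Fin n) ℝ) →ₗ[ℝ]
      (Matrix (Fin n) (Fin n) ℝ × Matrix (Fin m) (Fin n) ℝ) where
  toFun v := (u.1 * v.1 - v.1 * u.1, v.2 * u.1ᵀ - u.2 * v.1ᵀ)
  map_add' v w := by
    apply Prod.ext <;>
      simp only [Prod.fst_add, Prod.snd_add, Matrix.transpose_add, Matrix.mul_add,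
        Matrix.add_mul] <;> abel
  map_smul' c v := by
    apply Prod.ext <;>
      simp only [Prod.smul_fst, Prod.smul_snd, Matrix.transpose_smul, Matrix.mul_smul,
        Matrix.smul_mul, RingHom.id_apply, smul_sub]

noncomputable def sand (k l : ℕ) (X : Matrix (Fin k) (Fin k) ℝ) (Y : Matrix (Fin l) (Fin l) ℝ) :
    Matrix (Fin k) (Fin l) ℝ →ₗ[ℝ] Matrix (Fin k) (Fin l) ℝ where
  toFun A := X * A * Y
  map_add' A B := by simp [Matrix.mul_add, Matrix.add_mul]
  map_smul' c A := by simp [Matrix.mul_smul, Matrix.smul_mul]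

lemma stdBasis_repr (k l : ℕ) (M : Matrix (Fin k) (Fin l) ℝ) (i : Fin k) (j : Fin l) :
    (Matrix.stdBasis ℝ (Fin k) (Fin l)).repr M (i, j) = M i j := by
  simp [Matrix.stdBasis, Module.Basis.map_repr, Module.Basis.repr_reindex, Pi.basis_repr, Pi.basisFun_repr,
    Matrix.ofLinearEquiv]

lemma trace_sand (k l : ℕ) (X : Matrix (Fin k) (Fin k) ℝ) (Y : Matrix (Fin l) (Fin l) ℝ) :
    LinearMap.trace ℝ _ (sand k l X Y) = X.trace * Y.trace := by
  rw [LinearMap.trace_eq_matrix_trace ℝ (Matrix.stdBasis ℝ (Fin k) (Fin l))]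
  have : ∀ p : Fin k × Fin l,
      (LinearMap.toMatrix (Matrix.stdBasis ℝ (Fin k) (Fin l)) (Matrix.stdBasis ℝ (Fin k) (Fin l))
        (sand k l X Y)) p p = X p.1 p.1 * Y p.2 p.2 := by
    rintro ⟨i, j⟩
    rw [LinearMap.toMatrix_apply, stdBasis_repr]
    simp [sand, Matrix.stdBasis_eq_single, Matrix.mul_apply, Matrix.single,
      Finset.sum_mul, ite_and]
  simp only [Matrix.trace, Matrix.diag]
  rw [Finset.sum_congr rfl fun p _ => this p]
  rw [Fintype.sum_prod_type]
  rw [Finset.sum_comm]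
  simp [Matrix.trace, Finset.sum_mul, Finset.mul_sum, mul_comm]

noncomputable def offMap (m n : ℕ)
    (u v : Matrix (Fin n) (Fin n) ℝ × Matrix (Fin m) (Fin n) ℝ) :
    Matrix (Fin n) (Fin n) ℝ →ₗ[ℝ] Matrix (Fin m) (Fin n) ℝ where
  toFun A := -(v.2 * Aᵀ * u.1ᵀ) - u.2 * (v.1 * A - A * v.1)ᵀ
  map_add' A B := by
    simp only [Matrix.transpose_add, Matrix.mul_add, Matrix.add_mul, Matrix.transpose_sub,
      Matrix.mul_sub]
    abel
  map_smul' c A := by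
    simp only [Matrix.transpose_smul, Matrix.transpose_sub, Matrix.mul_sub, Matrix.mul_smul,
      Matrix.smul_mul, RingHom.id_apply, smul_sub, smul_neg]

/-- the Killing form `B*(u,v) = tr(ad*(u) ∘ ad*(v))` of the Lie
algebra `g* = ℝ^{(n,n)} × ℝ^{(m,n)}` is given by
`B*((X₁,Z₁),(X₂,Z₂)) = (2n+m)·tr(X₁X₂) − 2·tr(X₁)·tr(X₂)`. -/
theorem stmt_6 (m n : ℕ)
    (u v : Matrix (Fin n) (Fin n) ℝ × Matrix (Fin m) (Fin n) ℝ) :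
    LinearMap.trace ℝ (Matrix (Fin n) (Fin n) ℝ × Matrix (Fin m) (Fin n) ℝ)
        (adStar m n u ∘ₗ adStar m n v) =
      (2 * n + m) * (u.1 * v.1).trace - 2 * u.1.trace * v.1.trace := by
  have hdecomp : adStar m n u ∘ₗ adStar m n v =
      (LinearMap.prodMap
        (sand n n (u.1 * v.1) 1 - sand n n u.1 v.1 - sand n n v.1 u.1 + sand n n 1 (v.1 * u.1))
        (sand m n 1 (v.1ᵀ * u.1ᵀ)))
      + (LinearMap.inr ℝ _ _ ∘ₗ offMap m n u v ∘ₗ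
          LinearMap.fst ℝ (Matrix (Fin n) (Fin n) ℝ) (Matrix (Fin m) (Fin n) ℝ)) := by
    apply LinearMap.ext
    rintro ⟨A, B⟩
    apply Prod.ext <;>
      simp only [adStar, sand, offMap, LinearMap.coe_comp, LinearMap.coe_mk, AddHom.coe_mk,
        Function.comp_apply, LinearMap.add_apply, LinearMap.prodMap_apply, LinearMap.sub_apply,
        LinearMap.inr_apply, LinearMap.fst_apply, Prod.fst_add, Prod.snd_add,
        Matrix.transpose_sub, Matrix.transpose_mul, Matrix.mul_one, Matrix.one_mul,
        Matrix.mul_sub, Matrix.sub_mul, Matrix.mul_assoc, Prod.mk_add_mk] <;>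
      abel
  rw [hdecomp, map_add, LinearMap.trace_prodMap', map_add, map_sub, map_sub,
    trace_sand, trace_sand, trace_sand, trace_sand, trace_sand]
  have hz : LinearMap.trace ℝ _ (LinearMap.inr ℝ (Matrix (Fin n) (Fin n) ℝ)
      (Matrix (Fin m) (Fin n) ℝ) ∘ₗ offMap m n u v ∘ₗ
      LinearMap.fst ℝ (Matrix (Fin n) (Fin n) ℝ) (Matrix (Fin m) (Fin n) ℝ)) = 0 := by
    rw [LinearMap.trace_comp_comm', LinearMap.comp_assoc, LinearMap.fst_comp_inr,
      LinearMap.comp_zero, map_zero]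
  rw [hz]
  have h1 : (v.1ᵀ * u.1ᵀ).trace = (u.1 * v.1).trace := by
    rw [← Matrix.transpose_mul, Matrix.trace_transpose]
  have h2 : (v.1 * u.1).trace = (u.1 * v.1).trace := Matrix.trace_mul_comm v.1 u.1
  simp [h1, h2, Matrix.trace_one]
  ring
end

section
/- Let A, B be positive real numbers. For every g ∈ GL(n,ℝ), every Y ∈ P_n, every symmetric n×n real matrix H, and every W ∈ ℝ^{(m,n)}, setting Y* = g·Y·ᵗg, H* = g·H·ᵗg, and W* = W·ᵗg, one has A·tr(Y*⁻¹·H*·Y*⁻¹·H*) + B·tr(Y*⁻¹·ᵗW*·W*) = A·tr(Y⁻¹·H·Y⁻¹·H) + B·tr(Y⁻¹·ᵗW·W). (This expresses that the Riemannian metric ds²_{n,m;A,B} = A·tr(Y⁻¹dY·Y⁻¹dY) + B·tr(Y⁻¹·ᵗ(dV)·dV) on P_n × ℝ^{(m,n)} is invariant under the GL_{n,m}-action (g,λ)·(Y,V) = (g·Y·ᵗg, (V+λ)·ᵗg).) -/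
/-!
Congruence `M ↦ G M Gᵀ` turns `Y⁻¹ H` into its conjugate `Gᵀ⁻¹ (Y⁻¹ H) Gᵀ`, and likewise
`Y⁻¹ Wᵀ W`, since `(W Gᵀ)ᵀ (W Gᵀ) = G (Wᵀ W) Gᵀ`. Both traces in the metric are traces of
`Y⁻¹ H`, its square, or `Y⁻¹ Wᵀ W`, hence are invariant under conjugation.
-/

open Matrix

namespace Matrix

variable {n K : Type*} [Fintype n] [DecidableEq n] [CommRing K]

theorem mul_mul_inv_mul_mul_mul_eq_conj {P Q : Matrix n n K} (hP : IsUnit P)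
    (Y H : Matrix n n K) :
    (P * Y * Q)⁻¹ * (P * H * Q) = Q⁻¹ * (Y⁻¹ * H) * Q := by
  rw [mul_inv_rev, mul_inv_rev]
  calc Q⁻¹ * (Y⁻¹ * P⁻¹) * (P * H * Q) = Q⁻¹ * Y⁻¹ * (P⁻¹ * P) * H * Q := by
        simp only [Matrix.mul_assoc]
    _ = Q⁻¹ * (Y⁻¹ * H) * Q := by
        rw [nonsing_inv_mul P ((isUnit_iff_isUnit_det P).mp hP)]
        simp only [Matrix.mul_one, Matrix.mul_assoc]

theorem inv_conj_mul_inv_conj {Q : Matrix n n K} (hQ : IsUnit Q) (X Z : Matrix n n K) :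
    Q⁻¹ * X * Q * (Q⁻¹ * Z * Q) = Q⁻¹ * (X * Z) * Q := by
  calc Q⁻¹ * X * Q * (Q⁻¹ * Z * Q) = Q⁻¹ * X * (Q * Q⁻¹) * Z * Q := by
        simp only [Matrix.mul_assoc]
    _ = Q⁻¹ * (X * Z) * Q := by
        rw [mul_nonsing_inv Q ((isUnit_iff_isUnit_det Q).mp hQ)]
        simp only [Matrix.mul_one, Matrix.mul_assoc]

end Matrix

theorem stmt_11_general (m n : ℕ) (A B : ℝ)
    (g : GL (Fin n) ℝ) (Y : Matrix (Fin n) (Fin n) ℝ)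
    (H : Matrix (Fin n) (Fin n) ℝ) (W : Matrix (Fin m) (Fin n) ℝ) :
    let G : Matrix (Fin n) (Fin n) ℝ := ↑g
    let Ys := G * Y * Gᵀ
    let Hs := G * H * Gᵀ
    let Ws := W * Gᵀ
    A * (Ys⁻¹ * Hs * Ys⁻¹ * Hs).trace + B * (Ys⁻¹ * Wsᵀ * Ws).trace =
      A * (Y⁻¹ * H * Y⁻¹ * H).trace + B * (Y⁻¹ * Wᵀ * W).trace := by
  intro G Ys Hs Ws
  have hG : IsUnit G := g.isUnit
  have hGt : IsUnit Gᵀ := (isUnit_transpose G).mpr hG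
  have hWs : Wsᵀ * Ws = G * (Wᵀ * W) * Gᵀ := by
    simp only [Ws, transpose_mul, transpose_transpose, Matrix.mul_assoc]
  have hH : Ys⁻¹ * Hs = Gᵀ⁻¹ * (Y⁻¹ * H) * Gᵀ := mul_mul_inv_mul_mul_mul_eq_conj hG Y H
  have hW : Ys⁻¹ * (Wsᵀ * Ws) = Gᵀ⁻¹ * (Y⁻¹ * (Wᵀ * W)) * Gᵀ := by
    rw [hWs]; exact mul_mul_inv_mul_mul_mul_eq_conj hG Y _
  have trace_H : (Ys⁻¹ * Hs * Ys⁻¹ * Hs).trace = (Y⁻¹ * H * Y⁻¹ * H).trace := by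
    rw [Matrix.mul_assoc _ Ys⁻¹, hH, inv_conj_mul_inv_conj hGt, trace_conj' hGt,
      Matrix.mul_assoc (Y⁻¹ * H)]
  have trace_W : (Ys⁻¹ * Wsᵀ * Ws).trace = (Y⁻¹ * Wᵀ * W).trace := by
    rw [Matrix.mul_assoc, hW, trace_conj' hGt, Matrix.mul_assoc]
  rw [trace_H, trace_W]

/-- invariance of the metric `ds²_{n,m;A,B}`: with
`Y* = g·Y·ᵗg`, `H* = g·H·ᵗg`, `W* = W·ᵗg` one has
`A·tr(Y*⁻¹H*Y*⁻¹H*) + B·tr(Y*⁻¹·ᵗW*·W*) = A·tr(Y⁻¹HY⁻¹H) + B·tr(Y⁻¹·ᵗW·W)`. -/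
theorem stmt_11 (m n : ℕ) (A B : ℝ) (hA : 0 < A) (hB : 0 < B)
    (g : GL (Fin n) ℝ) (Y : Matrix (Fin n) (Fin n) ℝ) (hY : Y.PosDef)
    (H : Matrix (Fin n) (Fin n) ℝ) (hH : Hᵀ = H) (W : Matrix (Fin m) (Fin n) ℝ) :
    let G : Matrix (Fin n) (Fin n) ℝ := ↑g
    let Ys := G * Y * Gᵀ
    let Hs := G * H * Gᵀ
    let Ws := W * Gᵀ
    A * (Ys⁻¹ * Hs * Ys⁻¹ * Hs).trace + B * (Ys⁻¹ * Wsᵀ * Ws).trace =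
      A * (Y⁻¹ * H * Y⁻¹ * H).trace + B * (Y⁻¹ * Wᵀ * W).trace :=
  stmt_11_general m n A B g Y H W
end

section
/- For every g ∈ GL(n,ℝ), the linear map on the real vector space Sym_n(ℝ) × ℝ^{(m,n)} given by (H,W) ↦ (g·H·ᵗg, W·ᵗg) has determinant whose absolute value equals |det g|^{n+m+1}; moreover, for every Y ∈ P_n this equals (det(g·Y·ᵗg)/det(Y))^{(n+m+1)/2}. (This is the change-of-variables computation showing that the volume element dv_{n,m}(Y,V) = det(Y)^{−(n+m+1)/2}[dY][dV] on P_n × ℝ^{(m,n)} is invariant under the GL_{n,m}-action.) -/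
open Matrix

/-- The space `Sym_n(ℝ)` of symmetric `n×n` real matrices, as a submodule. -/
def symSubmodule (n : ℕ) : Submodule ℝ (Matrix (Fin n) (Fin n) ℝ) where
  carrier := {X | Xᵀ = X}
  add_mem' := by
    rintro a b (ha : aᵀ = a) (hb : bᵀ = b)
    show (a + b)ᵀ = a + b
    rw [Matrix.transpose_add, ha, hb]
  zero_mem' := by simp
  smul_mem' := by
    rintro c a (ha : aᵀ = a)
    show (c • a)ᵀ = c • a
    rw [Matrix.transpose_smul, ha]

/-- The linear map `(H,W) ↦ (g·H·ᵗg, W·ᵗg)` on `Sym_n(ℝ) × ℝ^{(m,n)}`. -/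
noncomputable def symTangentMap (m n : ℕ) (g : GL (Fin n) ℝ) :
    (symSubmodule n × Matrix (Fin m) (Fin n) ℝ) →ₗ[ℝ]
      (symSubmodule n × Matrix (Fin m) (Fin n) ℝ) where
  toFun p :=
    (⟨(↑g : Matrix (Fin n) (Fin n) ℝ) * (↑p.1 : Matrix (Fin n) (Fin n) ℝ) *
        (↑g : Matrix (Fin n) (Fin n) ℝ)ᵀ, by
      have h : ((p.1 : Matrix (Fin n) (Fin n) ℝ))ᵀ = ↑p.1 := p.1.2
      show ((↑g : Matrix (Fin n) (Fin n) ℝ) * (↑p.1 : Matrix (Fin n) (Fin n) ℝ) * (↑g : Matrix (Fin n) (Fin n) ℝ)ᵀ)ᵀ =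
        (↑g : Matrix (Fin n) (Fin n) ℝ) * (↑p.1 : Matrix (Fin n) (Fin n) ℝ) * (↑g : Matrix (Fin n) (Fin n) ℝ)ᵀ
      rw [Matrix.transpose_mul, Matrix.transpose_mul, Matrix.transpose_transpose, h,
        Matrix.mul_assoc]⟩,
    p.2 * (↑g : Matrix (Fin n) (Fin n) ℝ)ᵀ)
  map_add' p q := by
    apply Prod.ext
    · apply Subtype.ext
      show (↑g : Matrix (Fin n) (Fin n) ℝ) * (↑p.1 + ↑q.1) * (↑g : Matrix (Fin n) (Fin n) ℝ)ᵀ =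
        (↑g : Matrix (Fin n) (Fin n) ℝ) * (↑p.1 : Matrix (Fin n) (Fin n) ℝ) * (↑g : Matrix (Fin n) (Fin n) ℝ)ᵀ +
          (↑g : Matrix (Fin n) (Fin n) ℝ) * (↑q.1 : Matrix (Fin n) (Fin n) ℝ) * (↑g : Matrix (Fin n) (Fin n) ℝ)ᵀ
      rw [Matrix.mul_add, Matrix.add_mul]
    · show (p.2 + q.2) * (↑g : Matrix (Fin n) (Fin n) ℝ)ᵀ =
        p.2 * (↑g : Matrix (Fin n) (Fin n) ℝ)ᵀ + q.2 * (↑g : Matrix (Fin n) (Fin n) ℝ)ᵀ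
      rw [Matrix.add_mul]
  map_smul' c p := by
    apply Prod.ext
    · apply Subtype.ext
      show (↑g : Matrix (Fin n) (Fin n) ℝ) * (c • ↑p.1) * (↑g : Matrix (Fin n) (Fin n) ℝ)ᵀ =
        c • ((↑g : Matrix (Fin n) (Fin n) ℝ) * (↑p.1 : Matrix (Fin n) (Fin n) ℝ) * (↑g : Matrix (Fin n) (Fin n) ℝ)ᵀ)
      rw [Matrix.mul_smul, Matrix.smul_mul]
    · show (c • p.2) * (↑g : Matrix (Fin n) (Fin n) ℝ)ᵀ =
        c • (p.2 * (↑g : Matrix (Fin n) (Fin n) ℝ)ᵀ)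
      rw [Matrix.smul_mul]

namespace Stmt12Aux

/-! ### The conjugation map on symmetric matrices -/

/-- Conjugation `X ↦ A X Aᵀ` on symmetric matrices, for an arbitrary matrix `A`. -/
noncomputable def conjSym (n : ℕ) (A : Matrix (Fin n) (Fin n) ℝ) :
    symSubmodule n →ₗ[ℝ] symSubmodule n where
  toFun X := ⟨A * (X : Matrix (Fin n) (Fin n) ℝ) * Aᵀ, by
    have h : ((X : Matrix (Fin n) (Fin n) ℝ))ᵀ = X := X.2
    show (A * (X : Matrix (Fin n) (Fin n) ℝ) * Aᵀ)ᵀ = A * (X : Matrix (Fin n) (Fin n) ℝ) * Aᵀ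
    rw [Matrix.transpose_mul, Matrix.transpose_mul, Matrix.transpose_transpose, h,
      Matrix.mul_assoc]⟩
  map_add' X Y := by
    apply Subtype.ext
    show A * ((X : Matrix (Fin n) (Fin n) ℝ) + Y) * Aᵀ = A * (X : Matrix (Fin n) (Fin n) ℝ) * Aᵀ
      + A * (Y : Matrix (Fin n) (Fin n) ℝ) * Aᵀ
    rw [Matrix.mul_add, Matrix.add_mul]
  map_smul' c X := by
    apply Subtype.ext
    show A * (c • (X : Matrix (Fin n) (Fin n) ℝ)) * Aᵀ
      = c • (A * (X : Matrix (Fin n) (Fin n) ℝ) * Aᵀ)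
    rw [Matrix.mul_smul, Matrix.smul_mul]

/-- The determinant of the conjugation map on symmetric matrices. -/
noncomputable def dsym (n : ℕ) (A : Matrix (Fin n) (Fin n) ℝ) : ℝ :=
  LinearMap.det (conjSym n A)

lemma conjSym_mul (n : ℕ) (A B : Matrix (Fin n) (Fin n) ℝ) :
    conjSym n (A * B) = conjSym n A ∘ₗ conjSym n B := by
  apply LinearMap.ext
  intro X
  apply Subtype.ext
  show (A * B) * (X : Matrix (Fin n) (Fin n) ℝ) * (A * B)ᵀ
    = A * (B * (X : Matrix (Fin n) (Fin n) ℝ) * Bᵀ) * Aᵀ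
  rw [Matrix.transpose_mul]
  simp only [Matrix.mul_assoc]

lemma conjSym_one (n : ℕ) : conjSym n 1 = LinearMap.id := by
  apply LinearMap.ext
  intro X
  apply Subtype.ext
  show (1 : Matrix (Fin n) (Fin n) ℝ) * X * (1 : Matrix (Fin n) (Fin n) ℝ)ᵀ = X
  simp

lemma dsym_mul (n : ℕ) (A B : Matrix (Fin n) (Fin n) ℝ) :
    dsym n (A * B) = dsym n A * dsym n B := by
  rw [dsym, conjSym_mul, LinearMap.det_comp]; rfl

lemma dsym_one (n : ℕ) : dsym n 1 = 1 := by
  rw [dsym, conjSym_one, LinearMap.det_id]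

/-! ### A coordinate system on symmetric matrices -/

abbrev SymIdx (n : ℕ) := {p : Fin n × Fin n // p.1 ≤ p.2}

noncomputable def symEquiv (n : ℕ) : symSubmodule n ≃ₗ[ℝ] (SymIdx n → ℝ) where
  toFun X p := (X : Matrix (Fin n) (Fin n) ℝ) p.1.1 p.1.2
  map_add' X Y := rfl
  map_smul' c X := rfl
  invFun f := ⟨Matrix.of fun i j =>
      if h : i ≤ j then f ⟨(i, j), h⟩ else f ⟨(j, i), le_of_not_ge h⟩, by
    show (Matrix.of fun i j => if h : i ≤ j then f ⟨(i, j), h⟩ else f ⟨(j, i), le_of_not_ge h⟩)ᵀ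
      = _
    ext i j
    simp only [Matrix.transpose_apply, Matrix.of_apply]
    rcases lt_trichotomy i j with h | rfl | h
    · rw [dif_neg (not_le.2 h), dif_pos h.le]
    · rfl
    · rw [dif_pos h.le, dif_neg (not_le.2 h)]⟩
  left_inv X := by
    apply Subtype.ext
    have hX : ((X : Matrix (Fin n) (Fin n) ℝ))ᵀ = X := X.2
    ext i j
    show (if h : i ≤ j then (X : Matrix (Fin n) (Fin n) ℝ) i j
      else (X : Matrix (Fin n) (Fin n) ℝ) j i) = (X : Matrix (Fin n) (Fin n) ℝ) i j
    split
    · rfl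
    · conv_rhs => rw [← hX]
      rfl
  right_inv f := by
    funext p
    obtain ⟨⟨i, j⟩, h⟩ := p
    show (if h' : i ≤ j then f ⟨(i, j), h'⟩ else f ⟨(j, i), le_of_not_ge h'⟩) = f ⟨(i, j), h⟩
    rw [dif_pos h]

noncomputable def symBasis (n : ℕ) : Module.Basis (SymIdx n) ℝ (symSubmodule n) :=
  Module.Basis.ofEquivFun (symEquiv n)

/-! ### `dsym` on diagonal matrices -/

lemma dsym_diagonal (n : ℕ) (d : Fin n → ℝ) :
    dsym n (Matrix.diagonal d) = ∏ p : SymIdx n, (d p.1.1 * d p.1.2) := by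
  have key : conjSym n (Matrix.diagonal d)
      = ((symEquiv n).symm : (SymIdx n → ℝ) →ₗ[ℝ] symSubmodule n)
        ∘ₗ (Matrix.toLin' (Matrix.diagonal (fun p : SymIdx n => d p.1.1 * d p.1.2)))
        ∘ₗ (((symEquiv n).symm.symm : symSubmodule n ≃ₗ[ℝ] (SymIdx n → ℝ))
            : symSubmodule n →ₗ[ℝ] (SymIdx n → ℝ)) := by
    apply LinearMap.ext
    intro X
    rw [LinearMap.comp_apply, LinearMap.comp_apply]
    rw [LinearEquiv.coe_coe, LinearEquiv.coe_coe]
    rw [LinearEquiv.symm_symm]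
    rw [LinearEquiv.eq_symm_apply]
    funext p
    simp only [Matrix.toLin'_apply, Matrix.mulVec_diagonal]
    show (Matrix.diagonal d * (X : Matrix (Fin n) (Fin n) ℝ) * (Matrix.diagonal d)ᵀ) p.1.1 p.1.2
      = (d p.1.1 * d p.1.2) * (X : Matrix (Fin n) (Fin n) ℝ) p.1.1 p.1.2
    rw [Matrix.diagonal_transpose, Matrix.mul_diagonal, Matrix.diagonal_mul]
    ring
  rw [dsym, key, LinearMap.det_conj, LinearMap.det_toLin', Matrix.det_diagonal]

/-! ### The square of the diagonal product -/

lemma prod_symIdx_sq (n : ℕ) (d : Fin n → ℝ) :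
    (∏ p : SymIdx n, (d p.1.1 * d p.1.2)) ^ 2 = (∏ i, d i) ^ (2 * (n + 1)) := by
  classical
  set F : Fin n × Fin n → ℝ := fun p => d p.1 * d p.2 with hF
  set A := Finset.univ.filter (fun p : Fin n × Fin n => p.1 ≤ p.2) with hA
  set B := Finset.univ.filter (fun p : Fin n × Fin n => ¬ p.1 ≤ p.2) with hB
  set C := Finset.univ.filter (fun p : Fin n × Fin n => p.1 < p.2) with hC
  set E := Finset.univ.filter (fun p : Fin n × Fin n => p.1 = p.2) with hE
  have hS : (∏ p : SymIdx n, (d p.1.1 * d p.1.2)) = ∏ p ∈ A, F p := by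
    rw [hA, Finset.prod_subtype (Finset.univ.filter (fun p : Fin n × Fin n => p.1 ≤ p.2))
      (p := fun p : Fin n × Fin n => p.1 ≤ p.2) (by simp) F]
  have h1 : (∏ p ∈ A, F p) * (∏ p ∈ B, F p) = ∏ p, F p :=
    Finset.prod_filter_mul_prod_filter_not _ _ _
  have h2 : (∏ p, F p) = (∏ i, d i) ^ n * (∏ i, d i) ^ n := by
    simp [hF, Fintype.prod_prod_type, Finset.prod_mul_distrib, Finset.prod_const,
      Finset.prod_pow, Finset.card_univ]
  have h3 : (∏ p ∈ B, F p) = ∏ p ∈ C, F p := by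
    refine Finset.prod_nbij' Prod.swap Prod.swap ?_ ?_ ?_ ?_ ?_
    · intro a ha
      simp only [hB, hC, Finset.mem_filter, Finset.mem_univ, true_and] at ha ⊢
      exact lt_of_not_ge ha
    · intro a ha
      simp only [hB, hC, Finset.mem_filter, Finset.mem_univ, true_and] at ha ⊢
      exact not_le.2 ha
    · intro a _; exact Prod.swap_swap a
    · intro a _; exact Prod.swap_swap a
    · intro a _
      simp only [hF, Prod.fst_swap, Prod.snd_swap]
      exact (mul_comm _ _)
  have hACE : A = C ∪ E := by
    ext p
    simp only [hA, hC, hE, Finset.mem_filter, Finset.mem_union, Finset.mem_univ, true_and]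
    exact le_iff_lt_or_eq
  have hdisj : Disjoint C E := by
    rw [Finset.disjoint_left]
    intro p hp hq
    simp only [hC, hE, Finset.mem_filter, Finset.mem_univ, true_and] at hp hq
    exact absurd hq (ne_of_lt hp)
  have h4 : (∏ p ∈ A, F p) = (∏ p ∈ C, F p) * ∏ p ∈ E, F p := by
    rw [hACE, Finset.prod_union hdisj]
  have h5 : (∏ p ∈ E, F p) = (∏ i, d i) ^ 2 := by
    rw [show (∏ i, d i) ^ 2 = ∏ i, (d i * d i) by
      rw [sq, ← Finset.prod_mul_distrib]]
    refine Finset.prod_nbij' (fun p => p.1) (fun i => (i, i)) ?_ ?_ ?_ ?_ ?_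
    · intro a _; exact Finset.mem_univ _
    · intro i _
      simp [hE]
    · intro a ha
      simp only [hE, Finset.mem_filter, Finset.mem_univ, true_and] at ha
      exact Prod.ext rfl ha
    · intro i _; rfl
    · intro a ha
      simp only [hE, Finset.mem_filter, Finset.mem_univ, true_and] at ha
      simp [hF, ← ha]
  calc (∏ p : SymIdx n, (d p.1.1 * d p.1.2)) ^ 2
      = (∏ p ∈ A, F p) * ((∏ p ∈ C, F p) * ∏ p ∈ E, F p) := by rw [hS, h4, sq]
    _ = ((∏ p ∈ A, F p) * (∏ p ∈ B, F p)) * ∏ p ∈ E, F p := by rw [h3]; ring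
    _ = (∏ i, d i) ^ n * (∏ i, d i) ^ n * (∏ i, d i) ^ 2 := by rw [h1, h2, h5]
    _ = (∏ i, d i) ^ (2 * (n + 1)) := by rw [← pow_add, ← pow_add]; congr 1; ring

/-! ### `dsym` on transvections -/

lemma diag_conj_transvection (n : ℕ) (i j : Fin n) (hij : i ≠ j) (c : ℝ) :
    Matrix.diagonal (fun k => if k = i then (2:ℝ) else 1) * Matrix.transvection i j c *
      Matrix.diagonal (fun k => if k = i then (2:ℝ)⁻¹ else 1)
      = Matrix.transvection i j (2 * c) := by
  ext a b
  simp only [Matrix.transvection, Matrix.mul_add, Matrix.add_mul, Matrix.mul_smul,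
    Matrix.smul_mul, Matrix.add_apply, Matrix.smul_apply]
  rw [Matrix.mul_diagonal, Matrix.diagonal_mul, Matrix.mul_diagonal, Matrix.diagonal_mul]
  simp only [Matrix.one_apply, Matrix.single_apply_same]
  by_cases hai : a = i <;> by_cases hbj : b = j <;>
    subst_vars <;>
    simp_all [Matrix.single, Matrix.one_apply, hij, Ne.symm hij] <;> ring_nf <;> aesop

lemma dsym_transvection (n : ℕ) (t : Matrix.TransvectionStruct (Fin n) ℝ) :
    dsym n t.toMatrix = 1 := by
  obtain ⟨i, j, hij, c⟩ := t
  rw [Matrix.TransvectionStruct.toMatrix_mk]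
  have hDD : Matrix.diagonal (fun k => if k = i then (2:ℝ) else 1) *
      Matrix.diagonal (fun k => if k = i then (2:ℝ)⁻¹ else 1) = 1 := by
    have hf : (fun k => (if k = i then (2:ℝ) else 1) * (if k = i then (2:ℝ)⁻¹ else 1))
        = fun _ => (1:ℝ) := by
      funext k; by_cases hk : k = i <;> simp [hk] <;> norm_num
    rw [Matrix.diagonal_mul_diagonal, hf, Matrix.diagonal_one]
  have hsq : dsym n (Matrix.transvection i j c) ^ 2 = dsym n (Matrix.transvection i j c) := by
    rw [sq, ← dsym_mul, Matrix.transvection_mul_transvection_same i j hij,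
      show c + c = 2 * c by ring, ← diag_conj_transvection n i j hij c,
      dsym_mul, dsym_mul, mul_comm (dsym n (Matrix.diagonal _)), mul_assoc,
      ← dsym_mul, hDD, dsym_one, mul_one]
  have hinv : dsym n (Matrix.transvection i j c) * dsym n (Matrix.transvection i j (-c)) = 1 := by
    rw [← dsym_mul, Matrix.transvection_mul_transvection_same i j hij, add_neg_cancel,
      Matrix.transvection_zero, dsym_one]
  calc dsym n (Matrix.transvection i j c)
      = dsym n (Matrix.transvection i j c) * 1 := (mul_one _).symm
    _ = dsym n (Matrix.transvection i j c) *
        (dsym n (Matrix.transvection i j c) * dsym n (Matrix.transvection i j (-c))) := by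
        rw [hinv]
    _ = dsym n (Matrix.transvection i j c) ^ 2 * dsym n (Matrix.transvection i j (-c)) := by
        ring
    _ = dsym n (Matrix.transvection i j c) * dsym n (Matrix.transvection i j (-c)) := by
        rw [hsq]
    _ = 1 := hinv

/-! ### `dsym` squared, for all invertible matrices -/

lemma dsym_sq (n : ℕ) (A : Matrix (Fin n) (Fin n) ℝ) (hA : A.det ≠ 0) :
    (dsym n A) ^ 2 = A.det ^ (2 * (n + 1)) := by
  apply Matrix.diagonal_transvection_induction_of_det_ne_zero
    (P := fun M => (dsym n M) ^ 2 = M.det ^ (2 * (n + 1))) A hA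
  · intro D _
    rw [dsym_diagonal, prod_symIdx_sq, Matrix.det_diagonal]
  · intro t
    rw [dsym_transvection, Matrix.TransvectionStruct.det, one_pow, one_pow]
  · intro M N _ _ hM hN
    rw [dsym_mul, Matrix.det_mul, mul_pow, mul_pow, hM, hN]

/-! ### The map `W ↦ W Aᵀ` on rectangular matrices -/

noncomputable def matMap (m n : ℕ) (A : Matrix (Fin n) (Fin n) ℝ) :
    Matrix (Fin m) (Fin n) ℝ →ₗ[ℝ] Matrix (Fin m) (Fin n) ℝ where
  toFun W := W * Aᵀ
  map_add' W V := Matrix.add_mul _ _ _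
  map_smul' c W := Matrix.smul_mul _ _ _

noncomputable def matEquiv (m n : ℕ) :
    Matrix (Fin m) (Fin n) ℝ ≃ₗ[ℝ] (Fin m × Fin n → ℝ) where
  toFun W p := W p.1 p.2
  map_add' W V := rfl
  map_smul' c W := rfl
  invFun f := Matrix.of fun i j => f (i, j)
  left_inv W := rfl
  right_inv f := rfl

open Kronecker in
lemma det_matMap (m n : ℕ) (A : Matrix (Fin n) (Fin n) ℝ) :
    LinearMap.det (matMap m n A) = A.det ^ m := by
  have key : matMap m n A
      = ((matEquiv m n).symm : (Fin m × Fin n → ℝ) →ₗ[ℝ] Matrix (Fin m) (Fin n) ℝ)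
        ∘ₗ (Matrix.toLin' ((1 : Matrix (Fin m) (Fin m) ℝ) ⊗ₖ A))
        ∘ₗ (((matEquiv m n).symm.symm : Matrix (Fin m) (Fin n) ℝ ≃ₗ[ℝ] (Fin m × Fin n → ℝ))
            : Matrix (Fin m) (Fin n) ℝ →ₗ[ℝ] (Fin m × Fin n → ℝ)) := by
    apply LinearMap.ext
    intro W
    rw [LinearMap.comp_apply, LinearMap.comp_apply]
    rw [LinearEquiv.coe_coe, LinearEquiv.coe_coe]
    rw [LinearEquiv.symm_symm]
    rw [LinearEquiv.eq_symm_apply]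
    funext p
    simp only [Matrix.toLin'_apply]
    show (W * Aᵀ) p.1 p.2
      = ((1 : Matrix (Fin m) (Fin m) ℝ) ⊗ₖ A).mulVec (fun q : Fin m × Fin n => W q.1 q.2) p
    rw [Matrix.mulVec, Matrix.mul_apply]
    simp only [dotProduct]
    rw [Fintype.sum_prod_type]
    simp only [Matrix.kroneckerMap_apply, Matrix.one_apply, Matrix.transpose_apply]
    rw [Finset.sum_eq_single (f := fun b => ∑ k, ((if p.1 = b then (1:ℝ) else 0) * A p.2 k) * W b k) p.1]
    · simp [mul_comm]
    · intro b _ hb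
      simp [Ne.symm hb]
    · simp
  rw [key, LinearMap.det_conj, LinearMap.det_toLin', Matrix.det_kronecker]
  simp

/-! ### determinant of a product map -/

lemma det_prodMap {ι κ : Type*} [Fintype ι] [Fintype κ] [DecidableEq ι] [DecidableEq κ]
    {M N : Type*} [AddCommGroup M] [Module ℝ M] [AddCommGroup N] [Module ℝ N]
    (bM : Module.Basis ι ℝ M) (bN : Module.Basis κ ℝ N) (f : M →ₗ[ℝ] M) (g : N →ₗ[ℝ] N) :
    LinearMap.det (f.prodMap g) = LinearMap.det f * LinearMap.det g := by
  rw [← LinearMap.det_toMatrix (bM.prod bN), LinearMap.toMatrix_prodMap,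
    Matrix.det_fromBlocks_zero₂₁, LinearMap.det_toMatrix, LinearMap.det_toMatrix]

end Stmt12Aux

/-- the linear map `(H,W) ↦ (g·H·ᵗg, W·ᵗg)` on `Sym_n(ℝ) × ℝ^{(m,n)}`
has `|det| = |det g|^{n+m+1}`, which for every `Y ∈ P_n` equals
`(det(g·Y·ᵗg)/det Y)^{(n+m+1)/2}`. -/
theorem stmt_12 (m n : ℕ) (g : GL (Fin n) ℝ) :
    |LinearMap.det (symTangentMap m n g)| =
      |(↑g : Matrix (Fin n) (Fin n) ℝ).det| ^ (n + m + 1) ∧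
    ∀ Y : Matrix (Fin n) (Fin n) ℝ, Y.PosDef →
      |LinearMap.det (symTangentMap m n g)| =
        (((↑g : Matrix (Fin n) (Fin n) ℝ) * Y * (↑g : Matrix (Fin n) (Fin n) ℝ)ᵀ).det / Y.det)
          ^ ((n + m + 1 : ℝ) / 2) := by
  have hdetg : ((↑g : Matrix (Fin n) (Fin n) ℝ)).det ≠ 0 := by
    have hu : IsUnit (↑g : Matrix (Fin n) (Fin n) ℝ) := g.isUnit
    exact ((Matrix.isUnit_iff_isUnit_det _).1 hu).ne_zero
  have hsplit : symTangentMap m n g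
      = (Stmt12Aux.conjSym n ↑g).prodMap (Stmt12Aux.matMap m n ↑g) := by
    apply LinearMap.ext
    intro p
    rfl
  have hdet : LinearMap.det (symTangentMap m n g)
      = Stmt12Aux.dsym n ↑g * ((↑g : Matrix (Fin n) (Fin n) ℝ).det) ^ m := by
    rw [hsplit, Stmt12Aux.det_prodMap (Stmt12Aux.symBasis n)
      (Module.Basis.ofEquivFun (Stmt12Aux.matEquiv m n)), Stmt12Aux.det_matMap]
    rfl
  have habs : |Stmt12Aux.dsym n ↑g| = |(↑g : Matrix (Fin n) (Fin n) ℝ).det| ^ (n + 1) := by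
    have h2 := Stmt12Aux.dsym_sq n ↑g hdetg
    have hsq : |Stmt12Aux.dsym n ↑g| ^ 2
        = (|(↑g : Matrix (Fin n) (Fin n) ℝ).det| ^ (n + 1)) ^ 2 := by
      rw [sq_abs, h2, ← pow_mul, mul_comm (n + 1) 2, pow_mul, pow_mul, sq_abs]
    calc |Stmt12Aux.dsym n ↑g| = Real.sqrt (|Stmt12Aux.dsym n ↑g| ^ 2) :=
        (Real.sqrt_sq (abs_nonneg _)).symm
      _ = Real.sqrt ((|(↑g : Matrix (Fin n) (Fin n) ℝ).det| ^ (n + 1)) ^ 2) := by rw [hsq]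
      _ = |(↑g : Matrix (Fin n) (Fin n) ℝ).det| ^ (n + 1) :=
        Real.sqrt_sq (pow_nonneg (abs_nonneg _) _)
  have hfirst : |LinearMap.det (symTangentMap m n g)|
      = |(↑g : Matrix (Fin n) (Fin n) ℝ).det| ^ (n + m + 1) := by
    rw [hdet, abs_mul, habs, abs_pow, ← pow_add]
    congr 1
    omega
  refine ⟨hfirst, ?_⟩
  intro Y hY
  have hYdet : Y.det ≠ 0 := hY.det_pos.ne'
  have hratio : (((↑g : Matrix (Fin n) (Fin n) ℝ) * Y * (↑g : Matrix (Fin n) (Fin n) ℝ)ᵀ).det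
      / Y.det) = ((↑g : Matrix (Fin n) (Fin n) ℝ).det) ^ 2 := by
    rw [Matrix.det_mul, Matrix.det_mul, Matrix.det_transpose]
    field_simp
  rw [hfirst, hratio]
  set z := |(↑g : Matrix (Fin n) (Fin n) ℝ).det| with hz
  have hzpos : (0:ℝ) ≤ z := abs_nonneg _
  have hzz : ((↑g : Matrix (Fin n) (Fin n) ℝ).det) ^ 2 = z ^ 2 := (sq_abs _).symm
  rw [hzz, ← Real.rpow_natCast z 2, ← Real.rpow_mul hzpos]
  rw [show ((2:ℕ):ℝ) * ((n + m + 1 : ℝ) / 2) = ((n + m + 1 : ℕ) : ℝ) by push_cast; ring]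
  rw [Real.rpow_natCast]
end

section
/- Let m be a positive integer and 1 ≤ k ≤ l ≤ m. For every smooth real-valued function f(y, v₁, …, v_m) on ℝ⁺ × ℝ^m, one has 2y·∂/∂y(y·∂²f/∂v_k∂v_l) − y·∂²/∂v_k∂v_l(2y·∂f/∂y) = 2·(y·∂²f/∂v_k∂v_l); that is, the operators Θ(p) = 2y·∂/∂y and Θ(q_{kl}) = y·∂²/∂v_k∂v_l satisfy the commutation relation Θ(p)∘Θ(q_{kl}) − Θ(q_{kl})∘Θ(p) = 2·Θ(q_{kl}). In particular the algebra D(P_{1,m}) of GL_{1,m}-invariant differential operators on P_{1,m} = ℝ⁺ × ℝ^{(m,1)} is not commutative. -/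
/-- Partial derivative in the first (`y`) coordinate of a function on
`ℝ × ℝ^m`. -/
noncomputable def pdY (m : ℕ) (u : ℝ × (Fin m → ℝ) → ℝ) (p : ℝ × (Fin m → ℝ)) : ℝ :=
  deriv (fun t => u (t, p.2)) p.1

/-- Partial derivative in the coordinate `v_j` of a function on `ℝ × ℝ^m`. -/
noncomputable def pdV (m : ℕ) (j : Fin m) (u : ℝ × (Fin m → ℝ) → ℝ)
    (p : ℝ × (Fin m → ℝ)) : ℝ :=
  deriv (fun t => u (p.1, Function.update p.2 j t)) (p.2 j)

namespace Stmt16Aux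

open Filter Topology

abbrev EE (m : ℕ) := ℝ × (Fin m → ℝ)

noncomputable def wY (m : ℕ) : EE m := (1, 0)
noncomputable def wV (m : ℕ) (j : Fin m) : EE m := (0, Pi.single j 1)

lemma lineY_hasDerivAt (m : ℕ) (p : EE m) (t : ℝ) :
    HasDerivAt (fun s : ℝ => ((s, p.2) : EE m)) (wY m) t :=
  (hasDerivAt_id t).prodMk (hasDerivAt_const t p.2)

lemma lineV_hasDerivAt (m : ℕ) (j : Fin m) (p : EE m) (t : ℝ) :
    HasDerivAt (fun s : ℝ => ((p.1, Function.update p.2 j s) : EE m)) (wV m j) t := by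
  refine (hasDerivAt_const t p.1).prodMk ?_
  rw [hasDerivAt_pi]
  intro i
  rcases eq_or_ne i j with rfl | hij
  · simpa [Function.update_apply] using hasDerivAt_id' t
  · simpa [Function.update_apply, hij, Pi.single_eq_of_ne hij] using hasDerivAt_const t (p.2 i)

lemma pdY_eq {m : ℕ} {u : EE m → ℝ} {p : EE m} (hu : DifferentiableAt ℝ u p) :
    pdY m u p = fderiv ℝ u p (wY m) := by
  simpa [pdY, Function.comp_def] using
    (hu.hasFDerivAt.comp_hasDerivAt_of_eq p.1 (lineY_hasDerivAt m p p.1) rfl).deriv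

lemma pdV_eq {m : ℕ} {j : Fin m} {u : EE m → ℝ} {p : EE m} (hu : DifferentiableAt ℝ u p) :
    pdV m j u p = fderiv ℝ u p (wV m j) := by
  simpa [pdV, Function.comp_def] using
    (hu.hasFDerivAt.comp_hasDerivAt_of_eq (p.2 j) (lineV_hasDerivAt m j p (p.2 j)) (by simp)).deriv

lemma pdY_congr {m : ℕ} {u v : EE m → ℝ} {p : EE m} (h : u =ᶠ[𝓝 p] v) :
    pdY m u p = pdY m v p := by
  have hc : Filter.Tendsto (fun s : ℝ => ((s, p.2) : EE m)) (𝓝 p.1) (𝓝 p) := by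
    have := (lineY_hasDerivAt m p p.1).continuousAt
    simpa [ContinuousAt] using this
  have h2 : (fun t => u (t, p.2)) =ᶠ[𝓝 p.1] fun t => v (t, p.2) := hc.eventually h
  exact h2.deriv_eq

lemma pdV_congr {m : ℕ} {j : Fin m} {u v : EE m → ℝ} {p : EE m} (h : u =ᶠ[𝓝 p] v) :
    pdV m j u p = pdV m j v p := by
  have hc : Filter.Tendsto (fun s : ℝ => ((p.1, Function.update p.2 j s) : EE m))
      (𝓝 (p.2 j)) (𝓝 p) := by
    have := (lineV_hasDerivAt m j p (p.2 j)).continuousAt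
    simpa [ContinuousAt] using this
  have h2 : (fun t => u (p.1, Function.update p.2 j t)) =ᶠ[𝓝 (p.2 j)]
      fun t => v (p.1, Function.update p.2 j t) := hc.eventually h
  exact h2.deriv_eq

lemma fderiv_apply_const {E' F G : Type*} [NormedAddCommGroup E'] [NormedSpace ℝ E']
    [NormedAddCommGroup F] [NormedSpace ℝ F] [NormedAddCommGroup G] [NormedSpace ℝ G]
    {c : E' → F →L[ℝ] G} {p : E'} (hc : DifferentiableAt ℝ c p) (v : F) (w : E') :
    fderiv ℝ (fun q => c q v) p w = fderiv ℝ c p w v := by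
  rw [fderiv_clm_apply hc (differentiableAt_const v)]
  simp

lemma fderiv_apply2_const {E' : Type*} [NormedAddCommGroup E'] [NormedSpace ℝ E']
    {c : E' → E' →L[ℝ] E' →L[ℝ] ℝ} {p : E'} (hc : DifferentiableAt ℝ c p) (a b w : E') :
    fderiv ℝ (fun q => c q a b) p w = fderiv ℝ c p w a b := by
  have h1 := fderiv_apply_const (hc.clm_apply (differentiableAt_const a)) b w
  have h2 := fderiv_apply_const hc a w
  calc fderiv ℝ (fun q => c q a b) p w = fderiv ℝ (fun q => c q a) p w b := h1
    _ = fderiv ℝ c p w a b := by rw [h2]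

lemma swap23 {E' : Type*} [NormedAddCommGroup E'] [NormedSpace ℝ E']
    {f : E' → ℝ} {S : Set E'} (hS : IsOpen S) (hf : ∀ q ∈ S, ContDiffAt ℝ 3 f q)
    {p : E'} (hp : p ∈ S) (a b c : E') :
    fderiv ℝ (fderiv ℝ (fderiv ℝ f)) p a b c = fderiv ℝ (fderiv ℝ (fderiv ℝ f)) p a c b := by
  have hBd : DifferentiableAt ℝ (fderiv ℝ (fderiv ℝ f)) p :=
    ((((hf p hp).fderiv_right (m := 2) (by norm_num)).fderiv_right (m := 1)
      (by norm_num))).differentiableAt one_ne_zero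
  have he : (fun q => fderiv ℝ (fderiv ℝ f) q b c) =ᶠ[𝓝 p]
      fun q => fderiv ℝ (fderiv ℝ f) q c b := by
    filter_upwards [hS.mem_nhds hp] with q hq
    exact ((hf q hq).isSymmSndFDerivAt (by norm_num)) b c
  have h1 := he.fderiv_eq (𝕜 := ℝ)
  have h2 := fderiv_apply2_const hBd b c a
  have h3 := fderiv_apply2_const hBd c b a
  rw [← h2, ← h3, h1]

lemma swap12 {E' : Type*} [NormedAddCommGroup E'] [NormedSpace ℝ E']
    {f : E' → ℝ} {S : Set E'} (hS : IsOpen S) (hf : ∀ q ∈ S, ContDiffAt ℝ 3 f q)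
    {p : E'} (hp : p ∈ S) (a b c : E') :
    fderiv ℝ (fderiv ℝ (fderiv ℝ f)) p a b c = fderiv ℝ (fderiv ℝ (fderiv ℝ f)) p b a c := by
  have hAq : ∀ q ∈ S, ContDiffAt ℝ 2 (fderiv ℝ f) q := fun q hq =>
    (hf q hq).fderiv_right (by norm_num)
  have hAd : ∀ q ∈ S, DifferentiableAt ℝ (fderiv ℝ f) q := fun q hq =>
    (hAq q hq).differentiableAt (by norm_num)
  have hBd : DifferentiableAt ℝ (fderiv ℝ (fderiv ℝ f)) p :=
    ((hAq p hp).fderiv_right (m := 1) le_rfl).differentiableAt one_ne_zero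
  let ev : (E' →L[ℝ] ℝ) →L[ℝ] ℝ := ContinuousLinearMap.apply ℝ ℝ c
  let Ψ : (E' →L[ℝ] (E' →L[ℝ] ℝ)) →L[ℝ] (E' →L[ℝ] ℝ) :=
    ContinuousLinearMap.compL ℝ E' (E' →L[ℝ] ℝ) ℝ ev
  have hfd' : ∀ q ∈ S, HasFDerivAt (fun r => fderiv ℝ f r c)
      (ev.comp (fderiv ℝ (fderiv ℝ f) q)) q := by
    intro q hq
    have h := ev.hasFDerivAt.comp q (hAd q hq).hasFDerivAt
    have heq : (fun r => fderiv ℝ f r c) = ev ∘ (fderiv ℝ f) := by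
      funext r; simp [ev]
    rw [heq]; exact h
  have hAc : ContDiffAt ℝ 2 (fun r => fderiv ℝ f r c) p :=
    (hAq p hp).clm_apply contDiffAt_const
  have hsym := hAc.isSymmSndFDerivAt (by simp)
  have hev1 : fderiv ℝ (fun r => fderiv ℝ f r c) =ᶠ[𝓝 p]
      fun q => ev.comp (fderiv ℝ (fderiv ℝ f) q) := by
    filter_upwards [hS.mem_nhds hp] with q hq using (hfd' q hq).fderiv
  have h2 := hev1.fderiv_eq (𝕜 := ℝ)
  have h3 : HasFDerivAt (fun q => ev.comp (fderiv ℝ (fderiv ℝ f) q))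
      (Ψ.comp (fderiv ℝ (fderiv ℝ (fderiv ℝ f)) p)) p := by
    have h := HasFDerivAt.comp (𝕜 := ℝ) (F := E' →L[ℝ] E' →L[ℝ] ℝ) (G := E' →L[ℝ] ℝ) p
      (ContinuousLinearMap.hasFDerivAt (𝕜 := ℝ) (E := E' →L[ℝ] E' →L[ℝ] ℝ) (F := E' →L[ℝ] ℝ) Ψ)
      hBd.hasFDerivAt
    have heq : (fun q => ev.comp (fderiv ℝ (fderiv ℝ f) q)) = Ψ ∘ (fderiv ℝ (fderiv ℝ f)) := by
      funext q; simp [Ψ, ContinuousLinearMap.compL_apply]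
    rw [heq]; exact h
  have key : ∀ x y : E', fderiv ℝ (fderiv ℝ (fun r => fderiv ℝ f r c)) p x y
      = fderiv ℝ (fderiv ℝ (fderiv ℝ f)) p x y c := by
    intro x y
    rw [h2, h3.fderiv]
    simp [Ψ, ev, ContinuousLinearMap.compL_apply]
  rw [← key a b, ← key b a]
  exact hsym a b

end Stmt16Aux

open Stmt16Aux Filter Topology

/-- for smooth `f` on `ℝ⁺ × ℝ^m` and `1 ≤ k ≤ l ≤ m`, the
operators `Θ(p) = 2y·∂/∂y` and `Θ(q_{kl}) = y·∂²/∂v_k∂v_l` satisfy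
`Θ(p)∘Θ(q_{kl}) − Θ(q_{kl})∘Θ(p) = 2·Θ(q_{kl})` on `ℝ⁺ × ℝ^m`. -/
theorem stmt_16 (m : ℕ) (hm : 0 < m) (k l : Fin m) (hkl : k ≤ l)
    (f : ℝ × (Fin m → ℝ) → ℝ)
    (hf : ContDiffOn ℝ (⊤ : ℕ∞) f {p : ℝ × (Fin m → ℝ) | 0 < p.1}) :
    let Θp : (ℝ × (Fin m → ℝ) → ℝ) → ℝ × (Fin m → ℝ) → ℝ :=
      fun u p => 2 * p.1 * pdY m u p
    let Θq : (ℝ × (Fin m → ℝ) → ℝ) → ℝ × (Fin m → ℝ) → ℝ :=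
      fun u p => p.1 * pdV m k (pdV m l u) p
    ∀ p : ℝ × (Fin m → ℝ), 0 < p.1 →
      Θp (Θq f) p - Θq (Θp f) p = 2 * Θq f p := by
  intro Θp Θq p hpS
  have hS : IsOpen {q : ℝ × (Fin m → ℝ) | 0 < q.1} :=
    isOpen_lt continuous_const continuous_fst
  have hp' : p ∈ {q : ℝ × (Fin m → ℝ) | 0 < q.1} := hpS
  have hfC : ∀ q ∈ {q : ℝ × (Fin m → ℝ) | 0 < q.1}, ContDiffAt ℝ 3 f q := fun q hq =>
    ((hf q hq).contDiffAt (hS.mem_nhds hq)).of_le (WithTop.coe_le_coe.mpr le_top)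
  have hfd : ∀ q ∈ {q : ℝ × (Fin m → ℝ) | 0 < q.1}, DifferentiableAt ℝ f q := fun q hq =>
    (hfC q hq).differentiableAt (by norm_num)
  have hAq : ∀ q ∈ {q : ℝ × (Fin m → ℝ) | 0 < q.1}, ContDiffAt ℝ 2 (fderiv ℝ f) q :=
    fun q hq => (hfC q hq).fderiv_right (m := 2) (by norm_num)
  have hAd : ∀ q ∈ {q : ℝ × (Fin m → ℝ) | 0 < q.1}, DifferentiableAt ℝ (fderiv ℝ f) q :=
    fun q hq => (hAq q hq).differentiableAt (by norm_num)
  have hBd : ∀ q ∈ {q : ℝ × (Fin m → ℝ) | 0 < q.1},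
      DifferentiableAt ℝ (fderiv ℝ (fderiv ℝ f)) q :=
    fun q hq => ((hAq q hq).fderiv_right (m := 1) (by norm_num)).differentiableAt one_ne_zero
  have hfst_app : ∀ (q w : ℝ × (Fin m → ℝ)),
      fderiv ℝ (fun r : ℝ × (Fin m → ℝ) => r.1) q w = w.1 := by
    intro q w
    rw [show (fun r : ℝ × (Fin m → ℝ) => r.1) = Prod.fst from rfl, fderiv_fst]
    rfl
  have g1 : ∀ q ∈ {q : ℝ × (Fin m → ℝ) | 0 < q.1},
      pdV m l f q = fderiv ℝ f q (wV m l) := fun q hq => pdV_eq (hfd q hq)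
  have g2 : ∀ q ∈ {q : ℝ × (Fin m → ℝ) | 0 < q.1},
      pdV m k (pdV m l f) q = fderiv ℝ (fderiv ℝ f) q (wV m k) (wV m l) := by
    intro q hq
    have he : pdV m l f =ᶠ[𝓝 q] fun r => fderiv ℝ f r (wV m l) := by
      filter_upwards [hS.mem_nhds hq] with r hr using g1 r hr
    rw [pdV_congr he, pdV_eq ((hAd q hq).clm_apply (differentiableAt_const _))]
    exact fderiv_apply_const (hAd q hq) _ _
  have gy : ∀ q ∈ {q : ℝ × (Fin m → ℝ) | 0 < q.1},
      pdY m f q = fderiv ℝ f q (wY m) := fun q hq => pdY_eq (hfd q hq)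
  have hfst : DifferentiableAt ℝ (fun q : ℝ × (Fin m → ℝ) => q.1) p := differentiableAt_fst
  have hBdk : DifferentiableAt ℝ
      (fun q => fderiv ℝ (fderiv ℝ f) q (wV m k) (wV m l)) p :=
    ((hBd p hp').clm_apply (differentiableAt_const _)).clm_apply (differentiableAt_const _)
  have key1 : pdY m (Θq f) p
      = fderiv ℝ (fderiv ℝ f) p (wV m k) (wV m l)
        + p.1 * fderiv ℝ (fderiv ℝ (fderiv ℝ f)) p (wY m) (wV m k) (wV m l) := by
    have he : Θq f =ᶠ[𝓝 p]
        fun q => q.1 * fderiv ℝ (fderiv ℝ f) q (wV m k) (wV m l) := by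
      filter_upwards [hS.mem_nhds hp'] with r hr
      show r.1 * pdV m k (pdV m l f) r
          = r.1 * fderiv ℝ (fderiv ℝ f) r (wV m k) (wV m l)
      rw [g2 r hr]
    rw [pdY_congr he, pdY_eq (hfst.fun_mul hBdk), fderiv_fun_mul hfst hBdk]
    have h3 : fderiv ℝ (fun q => fderiv ℝ (fderiv ℝ f) q (wV m k) (wV m l)) p (wY m)
        = fderiv ℝ (fderiv ℝ (fderiv ℝ f)) p (wY m) (wV m k) (wV m l) :=
      fderiv_apply2_const (hBd p hp') _ _ _
    simp only [ContinuousLinearMap.add_apply, ContinuousLinearMap.smul_apply,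
      smul_eq_mul, h3, hfst_app p (wY m)]
    show p.1 * fderiv ℝ (fderiv ℝ (fderiv ℝ f)) p (wY m) (wV m k) (wV m l)
        + fderiv ℝ (fderiv ℝ f) p (wV m k) (wV m l) * (wY m).1 = _
    rw [show (wY m).1 = 1 from rfl]
    ring
  have hy1 : ∀ q ∈ {q : ℝ × (Fin m → ℝ) | 0 < q.1},
      Θp f q = 2 * q.1 * fderiv ℝ f q (wY m) := by
    intro q hq
    show 2 * q.1 * pdY m f q = 2 * q.1 * fderiv ℝ f q (wY m)
    rw [gy q hq]
  have h6 : ∀ q ∈ {q : ℝ × (Fin m → ℝ) | 0 < q.1},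
      pdV m l (Θp f) q = 2 * q.1 * fderiv ℝ (fderiv ℝ f) q (wV m l) (wY m) := by
    intro q hq
    have he : Θp f =ᶠ[𝓝 q] fun r => 2 * r.1 * fderiv ℝ f r (wY m) := by
      filter_upwards [hS.mem_nhds hq] with r hr using hy1 r hr
    have hd2 : DifferentiableAt ℝ (fun r : ℝ × (Fin m → ℝ) => 2 * r.1) q :=
      (differentiableAt_const _).mul differentiableAt_fst
    have hAe : DifferentiableAt ℝ (fun r => fderiv ℝ f r (wY m)) q :=
      (hAd q hq).clm_apply (differentiableAt_const _)
    rw [pdV_congr he, pdV_eq (hd2.fun_mul hAe), fderiv_fun_mul hd2 hAe]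
    have h5 : fderiv ℝ (fun r => fderiv ℝ f r (wY m)) q (wV m l)
        = fderiv ℝ (fderiv ℝ f) q (wV m l) (wY m) := fderiv_apply_const (hAd q hq) _ _
    have h7 : fderiv ℝ (fun r : ℝ × (Fin m → ℝ) => 2 * r.1) q (wV m l) = 0 := by
      rw [fderiv_const_mul differentiableAt_fst]
      simp [ContinuousLinearMap.smul_apply, hfst_app q (wV m l),
        show (wV m l).1 = 0 from rfl]
    simp only [ContinuousLinearMap.add_apply, ContinuousLinearMap.smul_apply,
      smul_eq_mul, h5, h7]
    ring
  have key2 : pdV m k (pdV m l (Θp f)) p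
      = 2 * p.1 * fderiv ℝ (fderiv ℝ (fderiv ℝ f)) p (wV m k) (wV m l) (wY m) := by
    have he : pdV m l (Θp f) =ᶠ[𝓝 p]
        fun q => 2 * q.1 * fderiv ℝ (fderiv ℝ f) q (wV m l) (wY m) := by
      filter_upwards [hS.mem_nhds hp'] with r hr using h6 r hr
    have hd2 : DifferentiableAt ℝ (fun r : ℝ × (Fin m → ℝ) => 2 * r.1) p :=
      (differentiableAt_const _).mul differentiableAt_fst
    have hBe : DifferentiableAt ℝ
        (fun r => fderiv ℝ (fderiv ℝ f) r (wV m l) (wY m)) p :=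
      ((hBd p hp').clm_apply (differentiableAt_const _)).clm_apply (differentiableAt_const _)
    rw [pdV_congr he, pdV_eq (hd2.fun_mul hBe), fderiv_fun_mul hd2 hBe]
    have h5 : fderiv ℝ (fun r => fderiv ℝ (fderiv ℝ f) r (wV m l) (wY m)) p (wV m k)
        = fderiv ℝ (fderiv ℝ (fderiv ℝ f)) p (wV m k) (wV m l) (wY m) :=
      fderiv_apply2_const (hBd p hp') _ _ _
    have h7 : fderiv ℝ (fun r : ℝ × (Fin m → ℝ) => 2 * r.1) p (wV m k) = 0 := by
      rw [fderiv_const_mul differentiableAt_fst]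
      simp [ContinuousLinearMap.smul_apply, hfst_app p (wV m k),
        show (wV m k).1 = 0 from rfl]
    simp only [ContinuousLinearMap.add_apply, ContinuousLinearMap.smul_apply,
      smul_eq_mul, h5, h7]
    ring
  have hsym : fderiv ℝ (fderiv ℝ (fderiv ℝ f)) p (wY m) (wV m k) (wV m l)
      = fderiv ℝ (fderiv ℝ (fderiv ℝ f)) p (wV m k) (wV m l) (wY m) := by
    rw [swap12 hS hfC hp' (wY m) (wV m k) (wV m l),
      swap23 hS hfC hp' (wV m k) (wY m) (wV m l)]
  show 2 * p.1 * pdY m (Θq f) p - p.1 * pdV m k (pdV m l (Θp f)) p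
      = 2 * (p.1 * pdV m k (pdV m l f) p)
  rw [key1, key2, g2 p hp', hsym]
  ring
end

section
/- Let m be a positive integer. The operators Θ(p) = 2y·∂/∂y and Θ(q_{kl}) = y·∂²/∂v_k∂v_l (1 ≤ k ≤ l ≤ m) on ℝ⁺ × ℝ^m are invariant under the action of GL_{1,m} = ℝ^× ⋉ ℝ^m given by (a,λ)·(y,v) = (a²y, a(v+λ)): for every smooth f: ℝ⁺ × ℝ^m → ℝ, every a ∈ ℝ^×, and every λ ∈ ℝ^m, one has (Θ(p)(f ∘ φ_{a,λ})) = (Θ(p)f) ∘ φ_{a,λ} and (Θ(q_{kl})(f ∘ φ_{a,λ})) = (Θ(q_{kl})f) ∘ φ_{a,λ}, where φ_{a,λ}(y,v) = (a²y, a(v+λ)). -/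
lemma hasDerivAt_scaled {m : ℕ} (a : ℝ) (lam w : Fin m → ℝ) (j : Fin m) (t : ℝ) :
    HasDerivAt (fun s => fun i => a * (Function.update w j s i + lam i))
      (a • (Pi.single j 1 : Fin m → ℝ)) t := by
  have heq : (fun s => fun i => a * (Function.update w j s i + lam i))
      = fun s => a • (Function.update w j s + lam) := by
    funext s i; simp [smul_eq_mul]
  rw [heq]
  exact ((hasDerivAt_update w j t).add_const lam).const_smul a

lemma pdV_eq_fderiv {m : ℕ} (u : ℝ × (Fin m → ℝ) → ℝ) (q : ℝ × (Fin m → ℝ))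
    (hu : DifferentiableAt ℝ u q) (j : Fin m) :
    pdV m j u q = fderiv ℝ u q (0, Pi.single j 1) := by
  have hγ : HasDerivAt (fun t => (q.1, Function.update q.2 j t))
      ((0 : ℝ), (Pi.single j 1 : Fin m → ℝ)) (q.2 j) :=
    (hasDerivAt_const _ _).prodMk (hasDerivAt_update q.2 j _)
  have hF : HasFDerivAt u (fderiv ℝ u q) (q.1, Function.update q.2 j (q.2 j)) := by
    rw [Function.update_eq_self]; exact hu.hasFDerivAt
  exact (hF.comp_hasDerivAt (q.2 j) hγ).deriv

/-- the operators `Θ(p) = 2y·∂/∂y` and `Θ(q_{kl}) = y·∂²/∂v_k∂v_l`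
are invariant under the `GL_{1,m}`-action `φ_{a,λ}(y,v) = (a²y, a(v+λ))`:
`Θ(f ∘ φ_{a,λ}) = (Θf) ∘ φ_{a,λ}` for smooth `f` on `ℝ⁺ × ℝ^m`. -/
theorem stmt_17 (m : ℕ) (hm : 0 < m) (k l : Fin m) (hkl : k ≤ l)
    (f : ℝ × (Fin m → ℝ) → ℝ)
    (hf : ContDiffOn ℝ (⊤ : ℕ∞) f {p : ℝ × (Fin m → ℝ) | 0 < p.1})
    (a : ℝ) (ha : a ≠ 0) (lam : Fin m → ℝ) :
    let φ : ℝ × (Fin m → ℝ) → ℝ × (Fin m → ℝ) :=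
      fun p => (a ^ 2 * p.1, fun i => a * (p.2 i + lam i))
    let Θp : (ℝ × (Fin m → ℝ) → ℝ) → ℝ × (Fin m → ℝ) → ℝ :=
      fun u p => 2 * p.1 * pdY m u p
    let Θq : (ℝ × (Fin m → ℝ) → ℝ) → ℝ × (Fin m → ℝ) → ℝ :=
      fun u p => p.1 * pdV m k (pdV m l u) p
    ∀ p : ℝ × (Fin m → ℝ), 0 < p.1 →
      Θp (f ∘ φ) p = Θp f (φ p) ∧ Θq (f ∘ φ) p = Θq f (φ p) := by
  intro φ Θp Θq p hp
  have hU : IsOpen {p : ℝ × (Fin m → ℝ) | 0 < p.1} :=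
    isOpen_lt continuous_const continuous_fst
  have ha2 : (0:ℝ) < a ^ 2 := by positivity
  have hdf : ∀ q : ℝ × (Fin m → ℝ), 0 < q.1 → DifferentiableAt ℝ f q := fun q hq =>
    (hf.contDiffAt (hU.mem_nhds hq)).differentiableAt (by simp)
  have hφ : ∀ q : ℝ × (Fin m → ℝ), 0 < q.1 → 0 < (φ q).1 := fun q hq => mul_pos ha2 hq
  have hdg : ∀ q : ℝ × (Fin m → ℝ), 0 < q.1 →
      DifferentiableAt ℝ (fun r => fderiv ℝ f r ((0:ℝ), (Pi.single l 1 : Fin m → ℝ))) q := by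
    intro q hq
    have h1 : ContDiffAt ℝ (⊤ : ℕ∞) f q := hf.contDiffAt (hU.mem_nhds hq)
    have h2 : ContDiffAt ℝ (⊤ : ℕ∞) (fderiv ℝ f) q := h1.fderiv_right (by simp)
    exact (h2.clm_apply contDiffAt_const).differentiableAt (by simp)
  constructor
  · -- Θp part
    have hγ : HasDerivAt (fun t : ℝ => (a ^ 2 * t, (φ p).2))
        ((a^2 : ℝ), (0 : Fin m → ℝ)) p.1 := by
      simpa using ((hasDerivAt_id p.1).const_mul (a^2)).prodMk (hasDerivAt_const p.1 (φ p).2)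
    have hF : HasFDerivAt f (fderiv ℝ f (φ p)) (a ^ 2 * p.1, (φ p).2) :=
      (hdf _ (hφ p hp)).hasFDerivAt
    have h1 : pdY m (f ∘ φ) p = fderiv ℝ f (φ p) ((a^2 : ℝ), (0 : Fin m → ℝ)) :=
      (hF.comp_hasDerivAt p.1 hγ).deriv
    have h2 : pdY m f (φ p) = fderiv ℝ f (φ p) ((1:ℝ), (0 : Fin m → ℝ)) := by
      have hγ2 : HasDerivAt (fun t : ℝ => (t, (φ p).2)) ((1:ℝ), (0 : Fin m → ℝ)) (φ p).1 :=
        (hasDerivAt_id _).prodMk (hasDerivAt_const _ _)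
      have hF2 : HasFDerivAt f (fderiv ℝ f (φ p)) ((φ p).1, (φ p).2) := by
        rw [Prod.mk.eta]; exact (hdf _ (hφ p hp)).hasFDerivAt
      exact (hF2.comp_hasDerivAt (φ p).1 hγ2).deriv
    have hsv : fderiv ℝ f (φ p) ((a^2 : ℝ), (0 : Fin m → ℝ))
        = a^2 * fderiv ℝ f (φ p) ((1:ℝ), (0 : Fin m → ℝ)) := by
      have : ((a^2 : ℝ), (0 : Fin m → ℝ)) = (a^2 : ℝ) • ((1:ℝ), (0 : Fin m → ℝ)) := by simp
      rw [this, ContinuousLinearMap.map_smul, smul_eq_mul]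
    show 2 * p.1 * pdY m (f ∘ φ) p = 2 * (a ^ 2 * p.1) * pdY m f (φ p)
    rw [h1, h2, hsv]; ring
  · -- Θq part
    have keyl : ∀ q : ℝ × (Fin m → ℝ), 0 < q.1 →
        pdV m l (f ∘ φ) q = a * fderiv ℝ f (φ q) ((0:ℝ), (Pi.single l 1 : Fin m → ℝ)) := by
      intro q hq
      have hγ : HasDerivAt
          (fun t : ℝ => ((a^2 * q.1 : ℝ), fun i => a * (Function.update q.2 l t i + lam i)))
          ((0:ℝ), a • (Pi.single l 1 : Fin m → ℝ)) (q.2 l) :=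
        (hasDerivAt_const _ _).prodMk (hasDerivAt_scaled a lam q.2 l _)
      have hF : HasFDerivAt f (fderiv ℝ f (φ q))
          ((a^2 * q.1 : ℝ), fun i => a * (Function.update q.2 l (q.2 l) i + lam i)) := by
        have hupd : (fun i => a * (Function.update q.2 l (q.2 l) i + lam i))
            = fun i => a * (q.2 i + lam i) := by
          funext i; rw [Function.update_eq_self]
        rw [hupd]; exact (hdf _ (hφ q hq)).hasFDerivAt
      have h2 : pdV m l (f ∘ φ) q
          = fderiv ℝ f (φ q) ((0:ℝ), a • (Pi.single l 1 : Fin m → ℝ)) :=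
        (hF.comp_hasDerivAt (q.2 l) hγ).deriv
      rw [h2]
      have hsm : ((0:ℝ), a • (Pi.single l 1 : Fin m → ℝ))
          = a • ((0:ℝ), (Pi.single l 1 : Fin m → ℝ)) := by simp
      rw [hsm, ContinuousLinearMap.map_smul, smul_eq_mul]
    have hLHS : pdV m k (pdV m l (f ∘ φ)) p
        = a * (a * fderiv ℝ (fun r => fderiv ℝ f r ((0:ℝ), (Pi.single l 1 : Fin m → ℝ))) (φ p)
            ((0:ℝ), (Pi.single k 1 : Fin m → ℝ))) := by
      have hfun : (fun t => pdV m l (f ∘ φ) (p.1, Function.update p.2 k t))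
          = fun t => a * (fun r => fderiv ℝ f r ((0:ℝ), (Pi.single l 1 : Fin m → ℝ)))
              (φ (p.1, Function.update p.2 k t)) := by
        funext t
        exact keyl (p.1, Function.update p.2 k t) hp
      have hγ : HasDerivAt
          (fun t : ℝ => ((a^2 * p.1 : ℝ), fun i => a * (Function.update p.2 k t i + lam i)))
          ((0:ℝ), a • (Pi.single k 1 : Fin m → ℝ)) (p.2 k) :=
        (hasDerivAt_const _ _).prodMk (hasDerivAt_scaled a lam p.2 k _)
      have hF : HasFDerivAt (fun r => fderiv ℝ f r ((0:ℝ), (Pi.single l 1 : Fin m → ℝ)))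
          (fderiv ℝ (fun r => fderiv ℝ f r ((0:ℝ), (Pi.single l 1 : Fin m → ℝ))) (φ p))
          ((a^2 * p.1 : ℝ), fun i => a * (Function.update p.2 k (p.2 k) i + lam i)) := by
        have hupd : (fun i => a * (Function.update p.2 k (p.2 k) i + lam i))
            = fun i => a * (p.2 i + lam i) := by
          funext i; rw [Function.update_eq_self]
        rw [hupd]; exact (hdg (φ p) (hφ p hp)).hasFDerivAt
      have h0 := (hF.comp_hasDerivAt (p.2 k) hγ).const_mul a
      have hval : fderiv ℝ (fun r => fderiv ℝ f r ((0:ℝ), (Pi.single l 1 : Fin m → ℝ))) (φ p)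
          ((0:ℝ), a • (Pi.single k 1 : Fin m → ℝ))
          = a * fderiv ℝ (fun r => fderiv ℝ f r ((0:ℝ), (Pi.single l 1 : Fin m → ℝ))) (φ p)
              ((0:ℝ), (Pi.single k 1 : Fin m → ℝ)) := by
        have hsm : ((0:ℝ), a • (Pi.single k 1 : Fin m → ℝ))
            = a • ((0:ℝ), (Pi.single k 1 : Fin m → ℝ)) := by simp
        rw [hsm, ContinuousLinearMap.map_smul, smul_eq_mul]
      rw [hval] at h0
      have hstep : pdV m k (pdV m l (f ∘ φ)) p
          = deriv (fun t => pdV m l (f ∘ φ) (p.1, Function.update p.2 k t)) (p.2 k) := rfl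
      rw [hstep, hfun]
      exact h0.deriv
    have hRHS : pdV m k (pdV m l f) (φ p)
        = fderiv ℝ (fun r => fderiv ℝ f r ((0:ℝ), (Pi.single l 1 : Fin m → ℝ))) (φ p)
            ((0:ℝ), (Pi.single k 1 : Fin m → ℝ)) := by
      have hfun2 : (fun t => pdV m l f ((φ p).1, Function.update (φ p).2 k t))
          = fun t => (fun r => fderiv ℝ f r ((0:ℝ), (Pi.single l 1 : Fin m → ℝ)))
              ((φ p).1, Function.update (φ p).2 k t) := by
        funext t
        exact pdV_eq_fderiv f ((φ p).1, Function.update (φ p).2 k t) (hdf _ (hφ p hp)) l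
      have hstep : pdV m k (pdV m l f) (φ p)
          = deriv (fun t => pdV m l f ((φ p).1, Function.update (φ p).2 k t)) ((φ p).2 k) := rfl
      rw [hstep, hfun2]
      exact pdV_eq_fderiv (fun r => fderiv ℝ f r ((0:ℝ), (Pi.single l 1 : Fin m → ℝ)))
        (φ p) (hdg (φ p) (hφ p hp)) k
    show p.1 * pdV m k (pdV m l (f ∘ φ)) p = a ^ 2 * p.1 * pdV m k (pdV m l f) (φ p)
    rw [hLHS, hRHS]; ring
end

section
/- On P_2 × ℝ² with coordinates (y₁, y₂, y₃, v₁, v₂) (where Y = [[y₁,y₃],[y₃,y₂]] is positive definite), let D₁ = 2(y₁·∂/∂y₁ + y₂·∂/∂y₂ + y₃·∂/∂y₃) and Ψ = y₁·∂²/∂v₁² + 2y₃·∂²/∂v₁∂v₂ + y₂·∂²/∂v₂². Then for every smooth function f on P_2 × ℝ², D₁(Ψf) − Ψ(D₁f) = 2·Ψf; that is, [D₁, Ψ] = 2Ψ. In particular the algebra D(P_{2,1}) of GL_{2,1}-invariant differential operators is not commutative. -/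
open Filter Topology


/-- Partial derivative in the `i`-th coordinate of a function on `ℝ^N`. -/
noncomputable def pd (N : ℕ) (i : Fin N) (u : (Fin N → ℝ) → ℝ) (x : Fin N → ℝ) : ℝ :=
  deriv (fun t => u (Function.update x i t)) (x i)

noncomputable def fpd (i : Fin 5) (u : (Fin 5 → ℝ) → ℝ) (x : Fin 5 → ℝ) : ℝ :=
  fderiv ℝ u x (Pi.single i 1)

lemma pd_eq_fpd {u : (Fin 5 → ℝ) → ℝ} {x : Fin 5 → ℝ} (i : Fin 5)
    (h : DifferentiableAt ℝ u x) : pd 5 i u x = fpd i u x := by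
  have h2 := hasDerivAt_update x i (x i)
  have h3 : HasFDerivAt u (fderiv ℝ u x) (Function.update x i (x i)) := by
    rw [Function.update_eq_self]; exact h.hasFDerivAt
  have h1 := h3.comp_hasDerivAt (x i) h2
  exact h1.deriv

lemma pd_congr {u v : (Fin 5 → ℝ) → ℝ} {x : Fin 5 → ℝ} (i : Fin 5)
    (h : u =ᶠ[𝓝 x] v) : pd 5 i u x = pd 5 i v x := by
  apply Filter.EventuallyEq.deriv_eq
  have ht : Filter.Tendsto (fun t => Function.update x i t) (𝓝 (x i)) (𝓝 x) := by
    have hc := (hasDerivAt_update x i (x i)).continuousAt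
    rw [ContinuousAt, Function.update_eq_self] at hc
    exact hc
  exact ht.eventually h

lemma pd_eq {u v : (Fin 5 → ℝ) → ℝ} {x : Fin 5 → ℝ} (i : Fin 5)
    (h : u =ᶠ[𝓝 x] v) (hv : DifferentiableAt ℝ v x) : pd 5 i u x = fpd i v x :=
  (pd_congr i h).trans (pd_eq_fpd i hv)

lemma diffAt {U : Set (Fin 5 → ℝ)} (hU : IsOpen U) {u : (Fin 5 → ℝ) → ℝ}
    (hu : ContDiffOn ℝ (⊤ : ℕ∞) u U) {x : Fin 5 → ℝ} (hx : x ∈ U) : DifferentiableAt ℝ u x :=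
  (hu.contDiffAt (hU.mem_nhds hx)).differentiableAt (by simp)

lemma fpd_contDiffOn {U : Set (Fin 5 → ℝ)} (hU : IsOpen U) {u : (Fin 5 → ℝ) → ℝ}
    (hu : ContDiffOn ℝ (⊤ : ℕ∞) u U) (i : Fin 5) : ContDiffOn ℝ (⊤ : ℕ∞) (fpd i u) U := by
  have h1 : ContDiffOn ℝ (⊤ : ℕ∞) (fderiv ℝ u) U := hu.fderiv_of_isOpen hU (by simp)
  exact (ContinuousLinearMap.apply ℝ ℝ (Pi.single i (1:ℝ))).contDiff.comp_contDiffOn h1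

lemma fpd_comm {U : Set (Fin 5 → ℝ)} (hU : IsOpen U) {u : (Fin 5 → ℝ) → ℝ}
    (hu : ContDiffOn ℝ (⊤ : ℕ∞) u U) {x : Fin 5 → ℝ} (hx : x ∈ U) (i j : Fin 5) :
    fpd i (fpd j u) x = fpd j (fpd i u) x := by
  have hsym : IsSymmSndFDerivAt ℝ u x :=
    (hu.contDiffAt (hU.mem_nhds hx)).isSymmSndFDerivAt (by rw [minSmoothness_of_isRCLikeNormedField]; exact WithTop.coe_le_coe.mpr le_top)
  have hdf : DifferentiableAt ℝ (fderiv ℝ u) x :=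
    ((hu.fderiv_of_isOpen hU (by exact_mod_cast (le_of_eq (top_add 1) : (⊤:ℕ∞)+1 ≤ ⊤) : ((⊤ : ℕ∞) : WithTop ℕ∞) + 1 ≤ ((⊤ : ℕ∞) : WithTop ℕ∞))).contDiffAt (hU.mem_nhds hx)).differentiableAt (by simp)
  have key : ∀ i j : Fin 5,
      fpd i (fpd j u) x = fderiv ℝ (fderiv ℝ u) x (Pi.single i 1) (Pi.single j 1) := by
    intro i j
    have h2 : HasFDerivAt (fpd j u)
        ((ContinuousLinearMap.apply ℝ ℝ (Pi.single j (1:ℝ))).comp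
          (fderiv ℝ (fderiv ℝ u) x)) x := by
      have h0 := (ContinuousLinearMap.apply ℝ ℝ (Pi.single j (1:ℝ))).hasFDerivAt.comp x
        hdf.hasFDerivAt
      exact h0
    show fderiv ℝ (fpd j u) x (Pi.single i 1) = _
    rw [h2.fderiv]
    rfl
  rw [key i j, key j i]
  exact hsym _ _

lemma fpd_congrOn {U : Set (Fin 5 → ℝ)} (hU : IsOpen U) {u v : (Fin 5 → ℝ) → ℝ}
    (h : ∀ y ∈ U, u y = v y) {x : Fin 5 → ℝ} (hx : x ∈ U) (i : Fin 5) :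
    fpd i u x = fpd i v x := by
  unfold fpd
  rw [Filter.EventuallyEq.fderiv_eq (Filter.eventuallyEq_of_mem (hU.mem_nhds hx) h)]

lemma fpd_add {u v : (Fin 5 → ℝ) → ℝ} {x : Fin 5 → ℝ} (i : Fin 5)
    (hu : DifferentiableAt ℝ u x) (hv : DifferentiableAt ℝ v x) :
    fpd i (fun y => u y + v y) x = fpd i u x + fpd i v x := by
  simp [fpd, fderiv_fun_add hu hv]

lemma fpd_mul {u v : (Fin 5 → ℝ) → ℝ} {x : Fin 5 → ℝ} (i : Fin 5)
    (hu : DifferentiableAt ℝ u x) (hv : DifferentiableAt ℝ v x) :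
    fpd i (fun y => u y * v y) x = fpd i u x * v x + u x * fpd i v x := by
  simp [fpd, fderiv_fun_mul hu hv]
  ring

lemma fpd_const_mul {u : (Fin 5 → ℝ) → ℝ} {x : Fin 5 → ℝ} (c : ℝ) (i : Fin 5)
    (hu : DifferentiableAt ℝ u x) :
    fpd i (fun y => c * u y) x = c * fpd i u x := by
  simp [fpd, fderiv_const_mul hu c]

lemma hasFDerivAt_coord (j : Fin 5) (x : Fin 5 → ℝ) :
    HasFDerivAt (fun y : Fin 5 → ℝ => y j)
      (ContinuousLinearMap.proj (R := ℝ) (φ := fun _ : Fin 5 => ℝ) j) x := by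
  exact (ContinuousLinearMap.proj (R := ℝ) (φ := fun _ : Fin 5 => ℝ) j).hasFDerivAt

lemma fpd_coord (i j : Fin 5) (x : Fin 5 → ℝ) :
    fpd i (fun y => y j) x = (Pi.single i (1:ℝ) : Fin 5 → ℝ) j := by
  simp [fpd, (hasFDerivAt_coord j x).fderiv]

lemma diffAt_coord (j : Fin 5) (x : Fin 5 → ℝ) :
    DifferentiableAt ℝ (fun y : Fin 5 → ℝ => y j) x :=
  (hasFDerivAt_coord j x).differentiableAt

lemma comm3 {U : Set (Fin 5 → ℝ)} (hU : IsOpen U) {f : (Fin 5 → ℝ) → ℝ}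
    (hf : ContDiffOn ℝ (⊤ : ℕ∞) f U) {x : Fin 5 → ℝ} (hx : x ∈ U) (i a b : Fin 5) :
    fpd i (fpd a (fpd b f)) x = fpd a (fpd b (fpd i f)) x := by
  have h1 : fpd i (fpd a (fpd b f)) x = fpd a (fpd i (fpd b f)) x :=
    fpd_comm hU (fpd_contDiffOn hU hf b) hx i a
  have h2 : ∀ y ∈ U, fpd i (fpd b f) y = fpd b (fpd i f) y := fun y hy =>
    fpd_comm hU hf hy i b
  rw [h1, fpd_congrOn hU h2 hx a]

lemma expandG {p q r : (Fin 5 → ℝ) → ℝ} {x : Fin 5 → ℝ} (i : Fin 5)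
    (hp : DifferentiableAt ℝ p x) (hq : DifferentiableAt ℝ q x)
    (hr : DifferentiableAt ℝ r x) :
    fpd i (fun y => y 0 * p y + (2 * (y 2 * q y) + y 1 * r y)) x
    = ((Pi.single i (1:ℝ) : Fin 5 → ℝ) 0 * p x + x 0 * fpd i p x)
      + (2 * ((Pi.single i (1:ℝ) : Fin 5 → ℝ) 2 * q x + x 2 * fpd i q x)
        + ((Pi.single i (1:ℝ) : Fin 5 → ℝ) 1 * r x + x 1 * fpd i r x)) := by
  rw [fpd_add i ((diffAt_coord 0 x).fun_mul hp)
        ((((diffAt_coord 2 x).fun_mul hq).const_mul 2).fun_add ((diffAt_coord 1 x).fun_mul hr)),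
      fpd_mul i (diffAt_coord 0 x) hp,
      fpd_add i (((diffAt_coord 2 x).fun_mul hq).const_mul 2) ((diffAt_coord 1 x).fun_mul hr),
      fpd_const_mul 2 i ((diffAt_coord 2 x).fun_mul hq),
      fpd_mul i (diffAt_coord 2 x) hq,
      fpd_mul i (diffAt_coord 1 x) hr,
      fpd_coord, fpd_coord, fpd_coord]

lemma expandH {p q r : (Fin 5 → ℝ) → ℝ} {x : Fin 5 → ℝ} (i : Fin 5)
    (hp : DifferentiableAt ℝ p x) (hq : DifferentiableAt ℝ q x)
    (hr : DifferentiableAt ℝ r x) :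
    fpd i (fun y => 2 * (y 0 * p y + (y 1 * q y + y 2 * r y))) x
    = 2 * (((Pi.single i (1:ℝ) : Fin 5 → ℝ) 0 * p x + x 0 * fpd i p x)
      + (((Pi.single i (1:ℝ) : Fin 5 → ℝ) 1 * q x + x 1 * fpd i q x)
        + ((Pi.single i (1:ℝ) : Fin 5 → ℝ) 2 * r x + x 2 * fpd i r x))) := by
  rw [fpd_const_mul 2 i (((diffAt_coord 0 x).fun_mul hp).fun_add
        (((diffAt_coord 1 x).fun_mul hq).fun_add ((diffAt_coord 2 x).fun_mul hr))),
      fpd_add i ((diffAt_coord 0 x).fun_mul hp)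
        (((diffAt_coord 1 x).fun_mul hq).fun_add ((diffAt_coord 2 x).fun_mul hr)),
      fpd_mul i (diffAt_coord 0 x) hp,
      fpd_add i ((diffAt_coord 1 x).fun_mul hq) ((diffAt_coord 2 x).fun_mul hr),
      fpd_mul i (diffAt_coord 1 x) hq,
      fpd_mul i (diffAt_coord 2 x) hr,
      fpd_coord, fpd_coord, fpd_coord]

lemma coord_contDiffOn (U : Set (Fin 5 → ℝ)) (j : Fin 5) :
    ContDiffOn ℝ (⊤ : ℕ∞) (fun y : Fin 5 → ℝ => y j) U := by
  exact ((ContinuousLinearMap.proj (R := ℝ) (φ := fun _ : Fin 5 => ℝ) j).contDiff).contDiffOn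

lemma smoothG {U : Set (Fin 5 → ℝ)} {p q r : (Fin 5 → ℝ) → ℝ}
    (hp : ContDiffOn ℝ (⊤ : ℕ∞) p U) (hq : ContDiffOn ℝ (⊤ : ℕ∞) q U) (hr : ContDiffOn ℝ (⊤ : ℕ∞) r U) :
    ContDiffOn ℝ (⊤ : ℕ∞) (fun y => y 0 * p y + (2 * (y 2 * q y) + y 1 * r y)) U :=
  ((coord_contDiffOn U 0).mul hp).add
    ((contDiffOn_const.mul ((coord_contDiffOn U 2).mul hq)).add
      ((coord_contDiffOn U 1).mul hr))

lemma smoothH {U : Set (Fin 5 → ℝ)} {p q r : (Fin 5 → ℝ) → ℝ}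
    (hp : ContDiffOn ℝ (⊤ : ℕ∞) p U) (hq : ContDiffOn ℝ (⊤ : ℕ∞) q U) (hr : ContDiffOn ℝ (⊤ : ℕ∞) r U) :
    ContDiffOn ℝ (⊤ : ℕ∞) (fun y => 2 * (y 0 * p y + (y 1 * q y + y 2 * r y))) U :=
  contDiffOn_const.mul (((coord_contDiffOn U 0).mul hp).add
    (((coord_contDiffOn U 1).mul hq).add ((coord_contDiffOn U 2).mul hr)))

lemma key {U : Set (Fin 5 → ℝ)} (hU : IsOpen U) {f : (Fin 5 → ℝ) → ℝ}
    (hf : ContDiffOn ℝ (⊤ : ℕ∞) f U) {x : Fin 5 → ℝ} (hx : x ∈ U) :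
    2 * (x 0 * pd 5 0 (fun y => y 0 * pd 5 3 (pd 5 3 f) y + 2 * y 2 * pd 5 3 (pd 5 4 f) y
            + y 1 * pd 5 4 (pd 5 4 f) y) x
       + x 1 * pd 5 1 (fun y => y 0 * pd 5 3 (pd 5 3 f) y + 2 * y 2 * pd 5 3 (pd 5 4 f) y
            + y 1 * pd 5 4 (pd 5 4 f) y) x
       + x 2 * pd 5 2 (fun y => y 0 * pd 5 3 (pd 5 3 f) y + 2 * y 2 * pd 5 3 (pd 5 4 f) y
            + y 1 * pd 5 4 (pd 5 4 f) y) x)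
    - (x 0 * pd 5 3 (pd 5 3 (fun y => 2 * (y 0 * pd 5 0 f y + y 1 * pd 5 1 f y
            + y 2 * pd 5 2 f y))) x
       + 2 * x 2 * pd 5 3 (pd 5 4 (fun y => 2 * (y 0 * pd 5 0 f y + y 1 * pd 5 1 f y
            + y 2 * pd 5 2 f y))) x
       + x 1 * pd 5 4 (pd 5 4 (fun y => 2 * (y 0 * pd 5 0 f y + y 1 * pd 5 1 f y
            + y 2 * pd 5 2 f y))) x)
    = 2 * (x 0 * pd 5 3 (pd 5 3 f) x + 2 * x 2 * pd 5 3 (pd 5 4 f) x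
        + x 1 * pd 5 4 (pd 5 4 f) x) := by
  have hUx := hU.mem_nhds hx
  have hsm1 : ∀ i : Fin 5, ContDiffOn ℝ (⊤ : ℕ∞) (fpd i f) U := fpd_contDiffOn hU hf
  have hsm2 : ∀ i j : Fin 5, ContDiffOn ℝ (⊤ : ℕ∞) (fpd i (fpd j f)) U := fun i j =>
    fpd_contDiffOn hU (hsm1 j) i
  -- first and second order pd = fpd on U
  have hpd1 : ∀ i : Fin 5, ∀ y ∈ U, pd 5 i f y = fpd i f y := fun i y hy =>
    pd_eq_fpd i (diffAt hU hf hy)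
  have hpd2 : ∀ i j : Fin 5, ∀ y ∈ U, pd 5 i (pd 5 j f) y = fpd i (fpd j f) y :=
    fun i j y hy =>
      pd_eq i (Filter.eventuallyEq_of_mem (hU.mem_nhds hy) (hpd1 j))
        (diffAt hU (hsm1 j) hy)
  -- Ψ f agrees on U with the fpd version G
  have hΨG : ∀ y ∈ U,
      (fun y => y 0 * pd 5 3 (pd 5 3 f) y + 2 * y 2 * pd 5 3 (pd 5 4 f) y
        + y 1 * pd 5 4 (pd 5 4 f) y) y
      = (fun y => y 0 * fpd 3 (fpd 3 f) y + (2 * (y 2 * fpd 3 (fpd 4 f) y)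
        + y 1 * fpd 4 (fpd 4 f) y)) y := by
    intro y hy
    simp only
    rw [hpd2 3 3 y hy, hpd2 3 4 y hy, hpd2 4 4 y hy]
    ring
  have hGsmooth : ContDiffOn ℝ (⊤ : ℕ∞) (fun y => y 0 * fpd 3 (fpd 3 f) y
      + (2 * (y 2 * fpd 3 (fpd 4 f) y) + y 1 * fpd 4 (fpd 4 f) y)) U :=
    smoothG (hsm2 3 3) (hsm2 3 4) (hsm2 4 4)
  have hΨpd : ∀ i : Fin 5,
      pd 5 i (fun y => y 0 * pd 5 3 (pd 5 3 f) y + 2 * y 2 * pd 5 3 (pd 5 4 f) y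
        + y 1 * pd 5 4 (pd 5 4 f) y) x
      = fpd i (fun y => y 0 * fpd 3 (fpd 3 f) y + (2 * (y 2 * fpd 3 (fpd 4 f) y)
        + y 1 * fpd 4 (fpd 4 f) y)) x := fun i =>
    pd_eq i (Filter.eventuallyEq_of_mem hUx hΨG) (diffAt hU hGsmooth hx)
  -- D1 f agrees on U with the fpd version H
  have hD1H : ∀ y ∈ U,
      (fun y => 2 * (y 0 * pd 5 0 f y + y 1 * pd 5 1 f y + y 2 * pd 5 2 f y)) y
      = (fun y => 2 * (y 0 * fpd 0 f y + (y 1 * fpd 1 f y + y 2 * fpd 2 f y))) y := by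
    intro y hy
    simp only
    rw [hpd1 0 y hy, hpd1 1 y hy, hpd1 2 y hy]
    ring
  have hHsmooth : ContDiffOn ℝ (⊤ : ℕ∞) (fun y => 2 * (y 0 * fpd 0 f y
      + (y 1 * fpd 1 f y + y 2 * fpd 2 f y))) U :=
    smoothH (hsm1 0) (hsm1 1) (hsm1 2)
  -- pd 3 and pd 4 of D1 f on U
  have hpdH3 : ∀ y ∈ U,
      pd 5 3 (fun y => 2 * (y 0 * pd 5 0 f y + y 1 * pd 5 1 f y + y 2 * pd 5 2 f y)) y
      = (fun y => 2 * (y 0 * fpd 3 (fpd 0 f) y + (y 1 * fpd 3 (fpd 1 f) y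
          + y 2 * fpd 3 (fpd 2 f) y))) y := by
    intro y hy
    rw [pd_eq 3 (Filter.eventuallyEq_of_mem (hU.mem_nhds hy) hD1H)
        (diffAt hU hHsmooth hy),
      expandH 3 (diffAt hU (hsm1 0) hy) (diffAt hU (hsm1 1) hy) (diffAt hU (hsm1 2) hy)]
    simp [Pi.single_apply]
  have hpdH4 : ∀ y ∈ U,
      pd 5 4 (fun y => 2 * (y 0 * pd 5 0 f y + y 1 * pd 5 1 f y + y 2 * pd 5 2 f y)) y
      = (fun y => 2 * (y 0 * fpd 4 (fpd 0 f) y + (y 1 * fpd 4 (fpd 1 f) y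
          + y 2 * fpd 4 (fpd 2 f) y))) y := by
    intro y hy
    rw [pd_eq 4 (Filter.eventuallyEq_of_mem (hU.mem_nhds hy) hD1H)
        (diffAt hU hHsmooth hy),
      expandH 4 (diffAt hU (hsm1 0) hy) (diffAt hU (hsm1 1) hy) (diffAt hU (hsm1 2) hy)]
    simp [Pi.single_apply]
  have hH3smooth : ContDiffOn ℝ (⊤ : ℕ∞) (fun y => 2 * (y 0 * fpd 3 (fpd 0 f) y
      + (y 1 * fpd 3 (fpd 1 f) y + y 2 * fpd 3 (fpd 2 f) y))) U :=
    smoothH (hsm2 3 0) (hsm2 3 1) (hsm2 3 2)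
  have hH4smooth : ContDiffOn ℝ (⊤ : ℕ∞) (fun y => 2 * (y 0 * fpd 4 (fpd 0 f) y
      + (y 1 * fpd 4 (fpd 1 f) y + y 2 * fpd 4 (fpd 2 f) y))) U :=
    smoothH (hsm2 4 0) (hsm2 4 1) (hsm2 4 2)
  -- second pd of D1 f at x
  have h33 : pd 5 3 (pd 5 3 (fun y => 2 * (y 0 * pd 5 0 f y + y 1 * pd 5 1 f y
        + y 2 * pd 5 2 f y))) x
      = 2 * (x 0 * fpd 3 (fpd 3 (fpd 0 f)) x + (x 1 * fpd 3 (fpd 3 (fpd 1 f)) x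
        + x 2 * fpd 3 (fpd 3 (fpd 2 f)) x)) := by
    rw [pd_eq 3 (Filter.eventuallyEq_of_mem hUx hpdH3) (diffAt hU hH3smooth hx),
      expandH 3 (diffAt hU (hsm2 3 0) hx) (diffAt hU (hsm2 3 1) hx)
        (diffAt hU (hsm2 3 2) hx)]
    simp [Pi.single_apply]
  have h34 : pd 5 3 (pd 5 4 (fun y => 2 * (y 0 * pd 5 0 f y + y 1 * pd 5 1 f y
        + y 2 * pd 5 2 f y))) x
      = 2 * (x 0 * fpd 3 (fpd 4 (fpd 0 f)) x + (x 1 * fpd 3 (fpd 4 (fpd 1 f)) x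
        + x 2 * fpd 3 (fpd 4 (fpd 2 f)) x)) := by
    rw [pd_eq 3 (Filter.eventuallyEq_of_mem hUx hpdH4) (diffAt hU hH4smooth hx),
      expandH 3 (diffAt hU (hsm2 4 0) hx) (diffAt hU (hsm2 4 1) hx)
        (diffAt hU (hsm2 4 2) hx)]
    simp [Pi.single_apply]
  have h44 : pd 5 4 (pd 5 4 (fun y => 2 * (y 0 * pd 5 0 f y + y 1 * pd 5 1 f y
        + y 2 * pd 5 2 f y))) x
      = 2 * (x 0 * fpd 4 (fpd 4 (fpd 0 f)) x + (x 1 * fpd 4 (fpd 4 (fpd 1 f)) x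
        + x 2 * fpd 4 (fpd 4 (fpd 2 f)) x)) := by
    rw [pd_eq 4 (Filter.eventuallyEq_of_mem hUx hpdH4) (diffAt hU hH4smooth hx),
      expandH 4 (diffAt hU (hsm2 4 0) hx) (diffAt hU (hsm2 4 1) hx)
        (diffAt hU (hsm2 4 2) hx)]
    simp [Pi.single_apply]
  -- now rewrite everything
  rw [hΨpd 0, hΨpd 1, hΨpd 2, h33, h34, h44,
    expandG 0 (diffAt hU (hsm2 3 3) hx) (diffAt hU (hsm2 3 4) hx)
      (diffAt hU (hsm2 4 4) hx),
    expandG 1 (diffAt hU (hsm2 3 3) hx) (diffAt hU (hsm2 3 4) hx)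
      (diffAt hU (hsm2 4 4) hx),
    expandG 2 (diffAt hU (hsm2 3 3) hx) (diffAt hU (hsm2 3 4) hx)
      (diffAt hU (hsm2 4 4) hx),
    hpd2 3 3 x hx, hpd2 3 4 x hx, hpd2 4 4 x hx,
    comm3 hU hf hx 0 3 3, comm3 hU hf hx 0 3 4, comm3 hU hf hx 0 4 4,
    comm3 hU hf hx 1 3 3, comm3 hU hf hx 1 3 4, comm3 hU hf hx 1 4 4,
    comm3 hU hf hx 2 3 3, comm3 hU hf hx 2 3 4, comm3 hU hf hx 2 4 4]
  simp [Pi.single_apply]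
  ring

/-- on `P_2 × ℝ²` with coordinates `(y₁,y₂,y₃,v₁,v₂)`
(here `x 0 = y₁, x 1 = y₂, x 2 = y₃, x 3 = v₁, x 4 = v₂`, and `x` lies in `P_2 × ℝ²`
iff `y₁ > 0` and `y₁y₂ − y₃² > 0`), the operators
`D₁ = 2(y₁∂/∂y₁ + y₂∂/∂y₂ + y₃∂/∂y₃)` and
`Ψ = y₁∂²/∂v₁² + 2y₃∂²/∂v₁∂v₂ + y₂∂²/∂v₂²` satisfy `[D₁,Ψ] = 2Ψ` on smooth
functions. -/
theorem stmt_18 (f : (Fin 5 → ℝ) → ℝ)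
    (hf : ContDiffOn ℝ (⊤ : ℕ∞) f {x : Fin 5 → ℝ | 0 < x 0 ∧ 0 < x 0 * x 1 - (x 2) ^ 2}) :
    let D1 : ((Fin 5 → ℝ) → ℝ) → (Fin 5 → ℝ) → ℝ := fun u x =>
      2 * (x 0 * pd 5 0 u x + x 1 * pd 5 1 u x + x 2 * pd 5 2 u x)
    let Ψ : ((Fin 5 → ℝ) → ℝ) → (Fin 5 → ℝ) → ℝ := fun u x =>
      x 0 * pd 5 3 (pd 5 3 u) x + 2 * x 2 * pd 5 3 (pd 5 4 u) x +
        x 1 * pd 5 4 (pd 5 4 u) x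
    ∀ x : Fin 5 → ℝ, 0 < x 0 → 0 < x 0 * x 1 - (x 2) ^ 2 →
      D1 (Ψ f) x - Ψ (D1 f) x = 2 * Ψ f x := by
  intro D1 Ψ x h1 h2
  have hU : IsOpen {x : Fin 5 → ℝ | 0 < x 0 ∧ 0 < x 0 * x 1 - (x 2) ^ 2} :=
    (isOpen_lt continuous_const (continuous_apply 0)).inter
      (isOpen_lt continuous_const
        (((continuous_apply 0).mul (continuous_apply 1)).sub
          ((continuous_apply 2).pow 2)))
  exact key hU hf ⟨h1, h2⟩
end
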